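/- arXiv:1707.05543 — 10 statements merged into one kernel-verified Lean document; each statement's English description precedes it below -/
import Mathlib

section
/- Let d, d' ≥ 1 and let N be a completely positive trace-preserving linear map from d×d to d'×d' complex matrices, with Choi state π_N := (id_d ⊗ N)(ψ_d), where ψ_d = (1/d)·∑_{i,j=1}^d |ii⟩⟨jj| is the maximally entangled state on C^d ⊗ C^d. Then the infimum over separable density matrices σ on C^d ⊗ C^{d'} of D_max(π_N‖σ) is at most E_max(N), and E_max(N) is at most the infimum over separable density matrices σ on C^d ⊗ C^{d'} satisfying Tr_B σ = I_d/d of D_max(π_N‖σ). (Here Tr_B denotes the partial trace over the second factor: (Tr_B σ)_{ij} = ∑_b σ_{(i,b),(j,b)}.) -/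
open scoped Kronecker ComplexOrder
open Matrix

noncomputable section

/-- A density matrix: positive semidefinite with unit trace. -/
def IsDensity {n : Type*} [Fintype n] (M : Matrix n n ℂ) : Prop :=
  M.PosSemidef ∧ M.trace = 1

/-- A bipartite density matrix is separable if it is a finite convex combination of
Kronecker products of density matrices on the two factors. -/
def SepState {m k : Type*} [Fintype m] [Fintype k]
    (M : Matrix (m × k) (m × k) ℂ) : Prop :=
  ∃ (L : ℕ) (p : Fin L → ℝ) (P : Fin L → Matrix m m ℂ) (Q : Fin L → Matrix k k ℂ),
    (∀ i, 0 ≤ p i) ∧ (∑ i, p i) = 1 ∧ (∀ i, IsDensity (P i)) ∧ (∀ i, IsDensity (Q i)) ∧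
    M = ∑ i, ((p i : ℂ) • (P i ⊗ₖ Q i))

/-- Max-relative entropy `D_max(ρ‖σ) = inf {x : 2^x • σ - ρ ⪰ 0}`, `+∞` if no such `x`. -/
def Dmax {n : Type*} [Fintype n] (ρ σ : Matrix n n ℂ) : EReal :=
  sInf {x : EReal | ∃ r : ℝ, x = (r : EReal) ∧ (((2:ℝ) ^ r) • σ - ρ).PosSemidef}

/-- Partial trace over the second tensor factor. -/
def ptraceB {m k : Type*} [Fintype k] (M : Matrix (m × k) (m × k) ℂ) : Matrix m m ℂ :=
  Matrix.of fun i j => ∑ b, M (i, b) (j, b)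

/-- The extension `id ⊗ T` of a map on matrices to a bipartite system. -/
def idTensorFun {n d d' : Type*} (T : Matrix d d ℂ → Matrix d' d' ℂ)
    (M : Matrix (n × d) (n × d) ℂ) : Matrix (n × d') (n × d') ℂ :=
  Matrix.of fun p q => T (Matrix.of fun a b => M (p.1, a) (q.1, b)) p.2 q.2

/-- The maximally entangled state `ψ_d = (1/d) ∑_{i,j} |ii⟩⟨jj|`. -/
def maxEnt (d : ℕ) : Matrix (Fin d × Fin d) (Fin d × Fin d) ℂ :=
  Matrix.of fun p q => if p.1 = p.2 ∧ q.1 = q.2 then (1 / (d:ℂ)) else 0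

/-- Trace preservation for a linear map on matrices. -/
def IsTracePreserving {d d' : ℕ}
    (N : Matrix (Fin d) (Fin d) ℂ →ₗ[ℂ] Matrix (Fin d') (Fin d') ℂ) : Prop :=
  ∀ M, (N M).trace = M.trace

/-- Complete positivity: `id_n ⊗ N` maps positive semidefinite matrices to positive
semidefinite matrices, for every finite ancilla dimension `n`. -/
def IsCompletelyPositive {d d' : ℕ}
    (N : Matrix (Fin d) (Fin d) ℂ →ₗ[ℂ] Matrix (Fin d') (Fin d') ℂ) : Prop :=
  ∀ (n : ℕ) (M : Matrix (Fin n × Fin d) (Fin n × Fin d) ℂ),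
    M.PosSemidef → (idTensorFun (⇑N) M).PosSemidef

/-- Max-relative entropy of entanglement of a channel: supremum over all finite ancilla
dimensions `n ≥ 1` and input states `ρ` of the infimum over separable states `σ` of
`D_max((id_n ⊗ N)(ρ) ‖ σ)`. -/
def EmaxChannel {d d' : ℕ}
    (N : Matrix (Fin d) (Fin d) ℂ →ₗ[ℂ] Matrix (Fin d') (Fin d') ℂ) : EReal :=
  sSup {x : EReal | ∃ n : ℕ, 0 < n ∧ ∃ ρ : Matrix (Fin n × Fin d) (Fin n × Fin d) ℂ,
    IsDensity ρ ∧
    x = sInf {y : EReal | ∃ σ : Matrix (Fin n × Fin d') (Fin n × Fin d') ℂ,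
      IsDensity σ ∧ SepState σ ∧ y = Dmax (idTensorFun (⇑N) ρ) σ}}

/-!
Given an input state `ρ` on `α × Fin d`, the completely positive map `Λ(X) = d · Tr_β[ρ (1 ⊗ Xᵀ)]`
on the reference system satisfies `(Λ ⊗ id)(π_N) = (id ⊗ N)(ρ)` for every linear `N`. It sends a
separable `σ` to a separable operator, of trace one thanks to `Tr_B σ = I/d`, and, being positive,
carries `2^r σ - π_N ⪰ 0` over to `2^r (Λ ⊗ id)(σ) - (id ⊗ N)(ρ) ⪰ 0`. Hence every term of the
supremum defining `E_max(N)` is at most `D_max(π_N‖σ)`; the lower bound is the term `ρ = ψ_d`.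
-/

lemma Matrix.PosSemidef.exists_eq_smul_isDensity {m : Type*} [Fintype m] [Nonempty m]
    {A : Matrix m m ℂ} (hA : A.PosSemidef) : ∃ P, IsDensity P ∧ A = (A.trace.re : ℂ) • P := by
  classical
  have htr : (A.trace.re : ℂ) = A.trace :=
    (Complex.eq_re_of_ofReal_le (r := 0) (by simpa using hA.trace_nonneg)).symm
  by_cases h : A.trace = 0
  · let v : m → ℂ := Pi.single (Classical.arbitrary m) 1
    refine ⟨vecMulVec v (star v), ⟨posSemidef_vecMulVec_self_star v, ?_⟩, ?_⟩
    · simp [v, trace, vecMulVec_apply, Pi.single_apply]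
    · simp [hA.trace_eq_zero_iff.mp h]
  · refine ⟨(A.trace.re : ℂ)⁻¹ • A, ⟨hA.smul ?_, ?_⟩, ?_⟩
    · have := hA.trace_nonneg
      rw [htr]; positivity
    · rw [trace_smul, htr, smul_eq_mul, inv_mul_cancel₀ h]
    · rw [smul_smul, htr, mul_inv_cancel₀ h, one_smul]

lemma sepState_sum_kronecker {m k : Type*} [Fintype m] [Fintype k] {L : ℕ}
    {A : Fin L → Matrix m m ℂ} {Q : Fin L → Matrix k k ℂ} (hA : ∀ i, (A i).PosSemidef)
    (hQ : ∀ i, IsDensity (Q i)) (htr : (∑ i, A i ⊗ₖ Q i).trace = 1) :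
    SepState (∑ i, A i ⊗ₖ Q i) := by
  have : Nonempty m := by
    by_contra h
    rw [not_nonempty_iff] at h
    simp at htr
  choose P hP hAP using fun i => (hA i).exists_eq_smul_isDensity
  have hsum : ∑ i, (A i).trace = 1 := by
    simpa [trace_sum, trace_kronecker, (hQ _).2] using htr
  refine ⟨L, fun i => (A i).trace.re, P, Q, fun i => (Complex.nonneg_iff.mp (hA i).trace_nonneg).1,
    by simpa using congrArg Complex.re hsum, hP, hQ, Finset.sum_congr rfl fun i _ => ?_⟩
  conv_lhs => rw [hAP i]
  rw [smul_kronecker]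

section refMap

variable {α β γ : Type*} [Fintype α] [Fintype β] [Fintype γ]

/-- `refMap ρ X = Tr_β[ρ (1 ⊗ Xᵀ)]`. -/
def refMap (ρ : Matrix (α × β) (α × β) ℂ) (P : Matrix β β ℂ) : Matrix α α ℂ :=
  of fun a a' => ∑ i, ∑ j, ρ (a, i) (a', j) * P i j

def refMapTensorId (ρ : Matrix (α × β) (α × β) ℂ) :
    Matrix (β × γ) (β × γ) ℂ →ₗ[ℂ] Matrix (α × γ) (α × γ) ℂ where
  toFun M := of fun p q => ∑ i, ∑ j, ρ (p.1, i) (q.1, j) * M (i, p.2) (j, q.2)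
  map_add' M M' := by ext; simp [mul_add, Finset.sum_add_distrib]
  map_smul' z M := by ext; simp [Finset.mul_sum, mul_left_comm]

omit [Fintype α] [Fintype γ] in
lemma refMapTensorId_apply (ρ : Matrix (α × β) (α × β) ℂ) (M : Matrix (β × γ) (β × γ) ℂ)
    (p q : α × γ) :
    refMapTensorId ρ M p q = ∑ i, ∑ j, ρ (p.1, i) (q.1, j) * M (i, p.2) (j, q.2) := rfl

omit [Fintype α] [Fintype γ] in
lemma refMapTensorId_kronecker (ρ : Matrix (α × β) (α × β) ℂ) (P : Matrix β β ℂ)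
    (Q : Matrix γ γ ℂ) : refMapTensorId ρ (P ⊗ₖ Q) = refMap ρ P ⊗ₖ Q := by
  ext p q
  simp [refMapTensorId_apply, refMap, Finset.sum_mul, mul_assoc]

lemma posSemidef_refMapTensorId {ρ : Matrix (α × β) (α × β) ℂ} (hρ : ρ.PosSemidef)
    {M : Matrix (β × γ) (β × γ) ℂ} (hM : M.PosSemidef) : (refMapTensorId ρ M).PosSemidef := by
  classical
  -- `V` glues the second factor of `ρ` to the first factor of `M`.
  let V : Matrix ((α × β) × (β × γ)) (α × γ) ℂ :=
    of fun k p => if k.1.1 = p.1 ∧ k.2.1 = k.1.2 ∧ k.2.2 = p.2 then 1 else 0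
  have hV : refMapTensorId ρ M = Vᴴ * (ρ ⊗ₖ M) * V := by
    ext p q
    simp [V, refMapTensorId_apply, mul_apply, Fintype.sum_prod_type, ite_and,
      apply_ite (starRingEnd ℂ)]
    exact Finset.sum_comm
  rw [hV]
  exact (hρ.kronecker hM).conjTranspose_mul_mul_same V

lemma posSemidef_refMap {ρ : Matrix (α × β) (α × β) ℂ} (hρ : ρ.PosSemidef)
    {P : Matrix β β ℂ} (hP : P.PosSemidef) : (refMap ρ P).PosSemidef := by
  have h := posSemidef_refMapTensorId hρ (hP.kronecker (PosSemidef.one (n := Unit)))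
  rw [refMapTensorId_kronecker] at h
  convert h.submatrix (fun a => (a, ())) using 1
  ext; simp

lemma trace_refMapTensorId_of_ptraceB_eq_smul_one [DecidableEq β] (ρ : Matrix (α × β) (α × β) ℂ)
    {M : Matrix (β × γ) (β × γ) ℂ} {c : ℂ} (hM : ptraceB M = c • 1) :
    (refMapTensorId ρ M).trace = c * ρ.trace := by
  have hM' (i j : β) : ∑ b, M (i, b) (j, b) = c * if i = j then 1 else 0 := by
    simpa [ptraceB, one_apply] using congrFun (congrFun hM i) j
  simp only [trace, diag, refMapTensorId_apply, Fintype.sum_prod_type]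
  rw [Finset.mul_sum]
  refine Finset.sum_congr rfl fun a _ => ?_
  rw [Finset.mul_sum, Finset.sum_comm]
  refine Finset.sum_congr rfl fun i _ => ?_
  rw [Finset.sum_comm]
  simp [← Finset.mul_sum, hM', mul_comm]

lemma sepState_refMapTensorId {ρ : Matrix (α × β) (α × β) ℂ} (hρ : ρ.PosSemidef)
    {σ : Matrix (β × γ) (β × γ) ℂ} (hσ : SepState σ) (htr : (refMapTensorId ρ σ).trace = 1) :
    SepState (refMapTensorId ρ σ) := by
  obtain ⟨L, p, P, Q, hp, -, hP, hQ, rfl⟩ := hσ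
  have hsum : refMapTensorId ρ (∑ i, (p i : ℂ) • (P i ⊗ₖ Q i)) =
      ∑ i, ((p i : ℂ) • refMap ρ (P i)) ⊗ₖ Q i := by
    simp [refMapTensorId_kronecker, smul_kronecker]
  rw [hsum] at htr ⊢
  exact sepState_sum_kronecker
    (fun i => (posSemidef_refMap hρ (hP i).1).smul (Complex.zero_le_real.mpr (hp i))) hQ htr

end refMap

lemma isDensity_maxEnt {d : ℕ} (hd : d ≠ 0) : IsDensity (maxEnt d) := by
  let v : Fin d × Fin d → ℂ := fun p => if p.1 = p.2 then 1 else 0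
  have hv : maxEnt d = (d : ℂ)⁻¹ • vecMulVec v (star v) := by
    ext p q
    by_cases hp : p.1 = p.2 <;> by_cases hq : q.1 = q.2 <;>
      simp [maxEnt, v, vecMulVec_apply, hp, hq]
  refine ⟨hv ▸ (posSemidef_vecMulVec_self_star v).smul (by positivity), ?_⟩
  simp [maxEnt, trace, Fintype.sum_prod_type, hd]

lemma refMapTensorId_idTensorFun_maxEnt {α κ : Type*} [Fintype α] {d : ℕ} (hd : d ≠ 0)
    (N : Matrix (Fin d) (Fin d) ℂ →ₗ[ℂ] Matrix κ κ ℂ) (ρ : Matrix (α × Fin d) (α × Fin d) ℂ) :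
    refMapTensorId ((d : ℂ) • ρ) (idTensorFun N (maxEnt d)) = idTensorFun N ρ := by
  have hblock (i j : Fin d) :
      (of fun a b => maxEnt d (i, a) (j, b)) = (d : ℂ)⁻¹ • single i j 1 := by
    ext a b
    simp [maxEnt, single, ite_and]
  ext p q
  have hexp : (of fun a b => ρ (p.1, a) (q.1, b)) =
      ∑ i, ∑ j, ρ (p.1, i) (q.1, j) • single i j 1 := by
    ext a b
    simp [Matrix.sum_apply, single_apply, ite_and]
  simp only [refMapTensorId_apply, idTensorFun, of_apply, hblock, hexp, map_sum, map_smul,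
    Matrix.sum_apply, Matrix.smul_apply, smul_eq_mul]
  refine Finset.sum_congr rfl fun i _ => Finset.sum_congr rfl fun j _ => ?_
  field_simp

lemma Dmax_map_le {n n' : Type*} [Fintype n] [Fintype n']
    (F : Matrix n n ℂ →ₗ[ℂ] Matrix n' n' ℂ) (hF : ∀ M, M.PosSemidef → (F M).PosSemidef)
    (ρ σ : Matrix n n ℂ) : Dmax (F ρ) (F σ) ≤ Dmax ρ σ := by
  refine sInf_le_sInf ?_
  rintro _ ⟨r, rfl, h⟩
  exact ⟨r, rfl, by simpa only [map_sub, LinearMap.map_smul_of_tower] using hF _ h⟩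

theorem stmt0_general (d d' : ℕ) (hd : 1 ≤ d)
    (N : Matrix (Fin d) (Fin d) ℂ →ₗ[ℂ] Matrix (Fin d') (Fin d') ℂ) :
    sInf {y : EReal | ∃ σ : Matrix (Fin d × Fin d') (Fin d × Fin d') ℂ,
        IsDensity σ ∧ SepState σ ∧ y = Dmax (idTensorFun (⇑N) (maxEnt d)) σ}
      ≤ EmaxChannel N ∧
    EmaxChannel N ≤
      sInf {y : EReal | ∃ σ : Matrix (Fin d × Fin d') (Fin d × Fin d') ℂ,
        IsDensity σ ∧ SepState σ ∧
        ptraceB σ = ((d : ℂ))⁻¹ • (1 : Matrix (Fin d) (Fin d) ℂ) ∧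
        y = Dmax (idTensorFun (⇑N) (maxEnt d)) σ} := by
  have hd0 : d ≠ 0 := Nat.one_le_iff_ne_zero.mp hd
  refine ⟨le_sSup ⟨d, hd, maxEnt d, isDensity_maxEnt hd0, rfl⟩, sSup_le ?_⟩
  rintro _ ⟨n, -, ρ, hρ, rfl⟩
  refine le_sInf ?_
  rintro _ ⟨σ, hσ, hσsep, hσB, rfl⟩
  set F := refMapTensorId (γ := Fin d') ((d : ℂ) • ρ)
  have hdρ : ((d : ℂ) • ρ).PosSemidef := hρ.1.smul (by positivity)
  have hF (M) (hM : M.PosSemidef) : (F M).PosSemidef := posSemidef_refMapTensorId hdρ hM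
  have hFσ : (F σ).trace = 1 := by
    rw [trace_refMapTensorId_of_ptraceB_eq_smul_one _ hσB, trace_smul, hρ.2, smul_eq_mul, mul_one,
      inv_mul_cancel₀ (Nat.cast_ne_zero.mpr hd0)]
  calc sInf {y | ∃ σ', IsDensity σ' ∧ SepState σ' ∧ y = Dmax (idTensorFun N ρ) σ'}
      ≤ Dmax (idTensorFun N ρ) (F σ) :=
        sInf_le ⟨F σ, ⟨hF σ hσ.1, hFσ⟩, sepState_refMapTensorId hdρ hσsep hFσ, rfl⟩
    _ = Dmax (F (idTensorFun N (maxEnt d))) (F σ) := by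
        rw [refMapTensorId_idTensorFun_maxEnt hd0]
    _ ≤ Dmax (idTensorFun N (maxEnt d)) σ := Dmax_map_le F hF _ _

/-- The infimum over separable states of the max-relative entropy from the
Choi state lower-bounds `E_max(N)`, which in turn is upper-bounded by the corresponding
infimum restricted to separable states with maximally mixed reduction on the first factor. -/
theorem stmt0 (d d' : ℕ) (hd : 1 ≤ d) (hd' : 1 ≤ d')
    (N : Matrix (Fin d) (Fin d) ℂ →ₗ[ℂ] Matrix (Fin d') (Fin d') ℂ)
    (hCP : IsCompletelyPositive N) (hTP : IsTracePreserving N) :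
    sInf {y : EReal | ∃ σ : Matrix (Fin d × Fin d') (Fin d × Fin d') ℂ,
        IsDensity σ ∧ SepState σ ∧ y = Dmax (idTensorFun (⇑N) (maxEnt d)) σ}
      ≤ EmaxChannel N ∧
    EmaxChannel N ≤
      sInf {y : EReal | ∃ σ : Matrix (Fin d × Fin d') (Fin d × Fin d') ℂ,
        IsDensity σ ∧ SepState σ ∧
        ptraceB σ = ((d : ℂ))⁻¹ • (1 : Matrix (Fin d) (Fin d) ℂ) ∧
        y = Dmax (idTensorFun (⇑N) (maxEnt d)) σ} :=
  stmt0_general d d' hd N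
end
end

section
/- A 4×4 Hermitian matrix V satisfies all three conditions (i) V is positive semidefinite, (ii) the partial transpose V^PT is positive semidefinite, and (iii) U_θ V U_θ† = V for all θ ∈ ℝ, if and only if V has the following form: all off-diagonal entries of V vanish except possibly the ((0,0),(1,1)) and ((1,1),(0,0)) entries (i.e., the (1,4) and (4,1) entries in the ordered basis |00⟩,|01⟩,|10⟩,|11⟩), the diagonal entries α = V_{(0,0),(0,0)}, γ = V_{(0,1),(0,1)}, δ = V_{(1,0),(1,0)}, β = V_{(1,1),(1,1)} are nonnegative, and |V_{(0,0),(1,1)}| ≤ min{√(αβ), √(γδ)}. -/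
/-!
Conjugation by `U_θ` multiplies the entry `V p q` by `e^{iθ(c p - c q)}` with the charge
`c (i, k) = k - i`; taking `θ = π / (c p - c q)` shows that invariance for all `θ` means exactly
that `V` lives on pairs of equal charge: the diagonal and the corners `(00, 11)`, `(11, 00)`.
The partial transpose of such a matrix lives on the diagonal and on `(01, 10)`, `(10, 01)`.
For a Hermitian matrix supported on the diagonal and one pair `(i, j)`, the quadratic form is a
sum of nonnegative diagonal terms plus `a|x|² + b|y|² + 2 Re(x̄ v y)` with `v = M i j`, which is
nonnegative when `|v| ≤ √(ab)` by AM-GM; conversely `|M i j|² ≤ M i i M j j` is the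
nonnegativity of a principal `2 × 2` minor.
-/

open scoped Kronecker ComplexOrder
open Matrix

noncomputable section

/-- Partial transpose on the second tensor factor. -/
def ptransposeB {m k : Type*} (M : Matrix (m × k) (m × k) ℂ) : Matrix (m × k) (m × k) ℂ :=
  Matrix.of fun p q => M (p.1, q.2) (q.1, p.2)

/-- The diagonal two-qubit phase unitary `U_θ = diag(1, e^{iθ}, e^{-iθ}, 1)`. -/
def Utheta (θ : ℝ) : Matrix (Fin 2 × Fin 2) (Fin 2 × Fin 2) ℂ :=
  Matrix.diagonal fun p => Complex.exp (Complex.I * θ * (((p.2 : ℕ) : ℂ) - ((p.1 : ℕ) : ℂ)))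

lemma Complex.eq_re_of_nonneg {z : ℂ} (hz : 0 ≤ z) : z = z.re :=
  Complex.eq_re_of_ofReal_le (r := 0) (by rwa [Complex.ofReal_zero])

lemma zero_le_quadratic_form_two {a b : ℝ} (ha : 0 ≤ a) (hb : 0 ≤ b) {v : ℂ}
    (hv : ‖v‖ ≤ √(a * b)) (X Y : ℂ) :
    0 ≤ star X * a * X + star Y * b * Y + (star X * v * Y + star Y * star v * X) := by
  have hreal : star X * a * X + star Y * b * Y + (star X * v * Y + star Y * star v * X)
      = ((a * ‖X‖ ^ 2 + b * ‖Y‖ ^ 2 + 2 * (star X * v * Y).re : ℝ) : ℂ) := by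
    have hX := Complex.mul_conj' X
    have hY := Complex.mul_conj' Y
    push_cast
    rw [Complex.re_eq_add_conj]
    simp only [Complex.star_def, map_mul, Complex.conj_conj] at *
    linear_combination (a : ℂ) * hX + (b : ℂ) * hY
  rw [hreal, Complex.zero_le_real]
  have hcross : -(‖v‖ * (‖X‖ * ‖Y‖)) ≤ (star X * v * Y).re := by
    have := neg_le_of_abs_le (Complex.abs_re_le_norm (star X * v * Y))
    simpa [norm_mul, mul_comm, mul_left_comm, mul_assoc] using this
  have hamgm : 2 * (√a * ‖X‖) * (√b * ‖Y‖) ≤ a * ‖X‖ ^ 2 + b * ‖Y‖ ^ 2 := by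
    simpa [mul_pow, Real.sq_sqrt ha, Real.sq_sqrt hb] using
      two_mul_le_add_sq (√a * ‖X‖) (√b * ‖Y‖)
  rw [Real.sqrt_mul ha] at hv
  nlinarith [mul_le_mul_of_nonneg_right hv (mul_nonneg (norm_nonneg X) (norm_nonneg Y))]

section PosSemidef

variable {n : Type*}

theorem Matrix.PosSemidef.norm_apply_le_sqrt {M : Matrix n n ℂ} (hM : M.PosSemidef) (i j : n) :
    ‖M i j‖ ≤ √((M i i).re * (M j j).re) := by
  have hdet := (hM.submatrix ![i, j]).det_nonneg
  simp only [det_fin_two, submatrix_apply, Matrix.cons_val_zero, Matrix.cons_val_one] at hdet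
  have hii : M i i = (M i i).re := Complex.eq_re_of_nonneg hM.diag_nonneg
  have hjj : M j j = (M j j).re := Complex.eq_re_of_nonneg hM.diag_nonneg
  rw [← hM.isHermitian.apply j i, hii, hjj, Complex.star_def, Complex.mul_conj',
    ← Complex.ofReal_pow, ← Complex.ofReal_mul, ← Complex.ofReal_sub, Complex.zero_le_real,
    sub_nonneg] at hdet
  exact Real.le_sqrt_of_sq_le hdet

variable [Fintype n] [DecidableEq n]

theorem Matrix.posSemidef_of_apply_eq_zero {M : Matrix n n ℂ} (hM : M.IsHermitian) {i j : n}
    (hij : i ≠ j) (hzero : ∀ k l, k ≠ l → ¬(k = i ∧ l = j) → ¬(k = j ∧ l = i) → M k l = 0)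
    (hdiag : ∀ k, 0 ≤ M k k) (hv : ‖M i j‖ ≤ √((M i i).re * (M j j).re)) : M.PosSemidef := by
  have hsplit : M = diagonal (fun k => M k k) + single i j (M i j) + single j i (M j i) := by
    ext k l
    simp only [add_apply, diagonal_apply, single_apply]
    split_ifs <;> aesop
  refine .of_dotProduct_mulVec_nonneg hM fun x => ?_
  have hform : star x ⬝ᵥ M *ᵥ x = ∑ k, star (x k) * M k k * x k
      + (star (x i) * M i j * x j + star (x j) * M j i * x i) := by
    conv_lhs => rw [hsplit]
    simp only [add_mulVec, dotProduct_add, single_mulVec_eq, dotProduct_smul, dotProduct_single]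
    simp only [dotProduct, mulVec_diagonal, Pi.star_apply, mul_assoc]
    ring
  have hterm : ∀ k, 0 ≤ star (x k) * M k k * x k := fun k => by
    rw [mul_right_comm]; exact mul_nonneg (star_mul_self_nonneg _) (hdiag k)
  have hii : M i i = (M i i).re := Complex.eq_re_of_nonneg (hdiag i)
  have hjj : M j j = (M j j).re := Complex.eq_re_of_nonneg (hdiag j)
  calc 0 ≤ star (x i) * M i i * x i + star (x j) * M j j * x j
          + (star (x i) * M i j * x j + star (x j) * M j i * x i) := by
        rw [hii, hjj, ← hM.apply j i]
        exact zero_le_quadratic_form_two (Complex.nonneg_iff.mp (hdiag i)).1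
          (Complex.nonneg_iff.mp (hdiag j)).1 hv _ _
    _ ≤ _ := by
      grw [Finset.add_le_sum (fun k _ => hterm k) (Finset.mem_univ i) (Finset.mem_univ j) hij]
    _ = _ := hform.symm

end PosSemidef

section Phase

variable {n : Type*} [Fintype n] [DecidableEq n]

lemma diagonal_exp_mul_conjTranspose_apply (c : n → ℝ) (θ : ℝ) (V : Matrix n n ℂ) (p q : n) :
    (diagonal (fun k => Complex.exp (Complex.I * θ * c k)) * V *
        (diagonal fun k => Complex.exp (Complex.I * θ * c k))ᴴ) p q =
      Complex.exp (Complex.I * θ * (c p - c q)) * V p q := by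
  rw [diagonal_conjTranspose, mul_diagonal, diagonal_mul, Pi.star_apply, Complex.star_def,
    ← Complex.exp_conj, mul_sub, Complex.exp_sub]
  simp only [map_mul, Complex.conj_I, Complex.conj_ofReal, neg_mul, Complex.exp_neg]
  ring

theorem forall_diagonal_exp_conj_eq_iff (c : n → ℝ) (V : Matrix n n ℂ) :
    (∀ θ : ℝ, diagonal (fun k => Complex.exp (Complex.I * θ * c k)) * V *
        (diagonal fun k => Complex.exp (Complex.I * θ * c k))ᴴ = V) ↔
      ∀ p q, c p ≠ c q → V p q = 0 := by
  constructor
  · intro hinv p q hpq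
    have h := congr_fun (congr_fun (hinv (Real.pi / (c p - c q))) p) q
    rw [diagonal_exp_mul_conjTranspose_apply] at h
    have hphase :
        Complex.I * ((Real.pi / (c p - c q) : ℝ) : ℂ) * (c p - c q) = Real.pi * Complex.I := by
      have : (c p : ℂ) - c q ≠ 0 := by exact_mod_cast sub_ne_zero.mpr hpq
      push_cast; field_simp
    rw [hphase, Complex.exp_pi_mul_I] at h
    linear_combination (-1 / 2 : ℂ) * h
  · intro hzero θ
    ext p q
    rw [diagonal_exp_mul_conjTranspose_apply]
    by_cases hpq : c p = c q
    · simp [hpq]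
    · simp [hzero p q hpq]

end Phase

def charge (p : Fin 2 × Fin 2) : ℤ := (p.2 : ℕ) - (p.1 : ℕ)

lemma Utheta_eq_diagonal (θ : ℝ) :
    Utheta θ = diagonal fun p => Complex.exp (Complex.I * θ * (charge p : ℝ)) := by
  simp [Utheta, charge]

lemma charge_eq_charge_iff (p q : Fin 2 × Fin 2) :
    charge p = charge q ↔ p = q ∨ (p = (0, 0) ∧ q = (1, 1)) ∨ (p = (1, 1) ∧ q = (0, 0)) := by
  revert p q; decide

lemma Matrix.IsHermitian.ptransposeB {m k : Type*} {M : Matrix (m × k) (m × k) ℂ}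
    (hM : M.IsHermitian) : (ptransposeB M).IsHermitian := by
  ext p q
  exact hM.apply _ _

lemma ptransposeB_apply_eq_zero {V : Matrix (Fin 2 × Fin 2) (Fin 2 × Fin 2) ℂ}
    (hzero : ∀ p q : Fin 2 × Fin 2, p ≠ q → ¬(p = (0, 0) ∧ q = (1, 1)) →
      ¬(p = (1, 1) ∧ q = (0, 0)) → V p q = 0) :
    ∀ p q : Fin 2 × Fin 2, p ≠ q → ¬(p = (0, 1) ∧ q = (1, 0)) → ¬(p = (1, 0) ∧ q = (0, 1)) →
      ptransposeB V p q = 0 := by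
  intro p q hpq h1 h2
  apply hzero <;> revert hpq h1 h2 <;> revert p q <;> decide

theorem forall_Utheta_conj_eq_iff (V : Matrix (Fin 2 × Fin 2) (Fin 2 × Fin 2) ℂ) :
    (∀ θ : ℝ, Utheta θ * V * (Utheta θ)ᴴ = V) ↔
      ∀ p q : Fin 2 × Fin 2, p ≠ q → ¬(p = (0, 0) ∧ q = (1, 1)) → ¬(p = (1, 1) ∧ q = (0, 0)) →
        V p q = 0 := by
  simp only [Utheta_eq_diagonal, forall_diagonal_exp_conj_eq_iff, ne_eq, Int.cast_inj,
    charge_eq_charge_iff, not_or, and_imp]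

/-- A two-qubit Hermitian matrix is PSD, PPT and `U_θ`-invariant iff it has
the stated "X-shaped" form with nonnegative diagonal and
`|V_{00,11}| ≤ min{√(αβ), √(γδ)}`. -/
theorem stmt2 (V : Matrix (Fin 2 × Fin 2) (Fin 2 × Fin 2) ℂ) (hherm : V.IsHermitian) :
    (V.PosSemidef ∧ (ptransposeB V).PosSemidef ∧
        (∀ θ : ℝ, Utheta θ * V * (Utheta θ)ᴴ = V)) ↔
      ((∀ p q : Fin 2 × Fin 2, p ≠ q →
          ¬(p = ((0 : Fin 2), (0 : Fin 2)) ∧ q = ((1 : Fin 2), (1 : Fin 2))) →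
          ¬(p = ((1 : Fin 2), (1 : Fin 2)) ∧ q = ((0 : Fin 2), (0 : Fin 2))) →
          V p q = 0) ∧
        (∀ p : Fin 2 × Fin 2, 0 ≤ V p p) ∧
        ‖V ((0 : Fin 2), (0 : Fin 2)) ((1 : Fin 2), (1 : Fin 2))‖ ≤
          min (Real.sqrt ((V ((0 : Fin 2), (0 : Fin 2)) ((0 : Fin 2), (0 : Fin 2))).re *
                  (V ((1 : Fin 2), (1 : Fin 2)) ((1 : Fin 2), (1 : Fin 2))).re))
              (Real.sqrt ((V ((0 : Fin 2), (1 : Fin 2)) ((0 : Fin 2), (1 : Fin 2))).re *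
                  (V ((1 : Fin 2), (0 : Fin 2)) ((1 : Fin 2), (0 : Fin 2))).re))) := by
  rw [forall_Utheta_conj_eq_iff]
  constructor
  · rintro ⟨hV, hPT, hzero⟩
    exact ⟨hzero, fun p => hV.diag_nonneg,
      le_min (hV.norm_apply_le_sqrt _ _) (hPT.norm_apply_le_sqrt (0, 1) (1, 0))⟩
  · rintro ⟨hzero, hdiag, hv⟩
    rw [le_min_iff] at hv
    exact ⟨posSemidef_of_apply_eq_zero hherm (by decide) hzero hdiag hv.1,
      posSemidef_of_apply_eq_zero hherm.ptransposeB (by decide) (ptransposeB_apply_eq_zero hzero)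
        hdiag hv.2, hzero⟩
end
end

section
/- Let λ ∈ [0,1], let α, β ∈ [0,1], ξ ≥ 0 and φ ∈ ℝ satisfy ξ² ≤ min{αβ, (1−α)(1−β)}. If y ∈ ℝ is such that the 2×2 matrix y·[[α, ξe^{iφ}],[ξe^{−iφ}, β]] − [[1, √(1−λ)],[√(1−λ), 1−λ]] is positive semidefinite, then y ≥ 2 − λ. -/
/-!
Write `A` for the phased matrix and `v = (1, √(1-λ))`, so that the subtracted matrix is `v vᴴ`.
The constraint on `ξ` says exactly that `0 ≤ A ≤ 1` in the Loewner order. Testing the hypothesis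
`y A - v vᴴ ≥ 0` against `v` gives `y ⟨v, A v⟩ ≥ ‖v‖⁴`, and `0 ≤ ⟨v, A v⟩ ≤ ‖v‖²`, so
`y ≥ ‖v‖² = 2 - λ`.
-/

open scoped ComplexOrder
open Matrix

section

variable {n 𝕜 : Type*} [Fintype n] [RCLike 𝕜]

theorem two_mul_mul_mul_le_of_sq_le {a b c p q : ℝ} (ha : 0 ≤ a) (hb : 0 ≤ b)
    (habc : c ^ 2 ≤ a * b) : 2 * c * p * q ≤ a * p ^ 2 + b * q ^ 2 := by
  nlinarith [sq_nonneg (a * p ^ 2 - b * q ^ 2), mul_nonneg (sub_nonneg.2 habc) (sq_nonneg (p * q)),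
    mul_nonneg ha (sq_nonneg p), mul_nonneg hb (sq_nonneg q)]

theorem posSemidef_fin_two {a b : ℝ} {z : 𝕜} (ha : 0 ≤ a) (hb : 0 ≤ b)
    (hz : ‖z‖ ^ 2 ≤ a * b) : (!![(a : 𝕜), z; star z, (b : 𝕜)]).PosSemidef := by
  refine .of_dotProduct_mulVec_nonneg ?_ fun x => ?_
  · ext i j
    fin_cases i <;> fin_cases j <;> simp
  · set w := star (x 0) * z * x 1
    have hx : star x ⬝ᵥ !![(a : 𝕜), z; star z, (b : 𝕜)] *ᵥ x
        = ((a * ‖x 0‖ ^ 2 + b * ‖x 1‖ ^ 2 + 2 * RCLike.re w : ℝ) : 𝕜) := by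
      push_cast [← RCLike.conj_mul, RCLike.re_eq_add_conj]
      simp [dotProduct, mulVec, Fin.sum_univ_two, w]
      ring
    have hw : -(‖x 0‖ * ‖z‖ * ‖x 1‖) ≤ RCLike.re w := by
      simpa [w] using neg_le_of_abs_le (RCLike.abs_re_le_norm w)
    rw [hx, RCLike.ofReal_nonneg]
    linarith [two_mul_mul_mul_le_of_sq_le (p := ‖x 0‖) (q := ‖x 1‖) ha hb hz]

theorem posSemidef_one_sub_fin_two {a b : ℝ} {z : 𝕜} (ha : a ≤ 1) (hb : b ≤ 1)
    (hz : ‖z‖ ^ 2 ≤ (1 - a) * (1 - b)) : (1 - !![(a : 𝕜), z; star z, (b : 𝕜)]).PosSemidef := by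
  convert posSemidef_fin_two (sub_nonneg.2 ha) (sub_nonneg.2 hb) (z := -z) (by rwa [norm_neg])
    using 1
  ext i j
  fin_cases i <;> fin_cases j <;> simp

theorem star_dotProduct_self_le_of_posSemidef_smul_sub_vecMulVec [DecidableEq n]
    {A : Matrix n n 𝕜} {v : n → 𝕜} {y : ℝ} (hA : A.PosSemidef) (hA₁ : (1 - A).PosSemidef)
    (hv : v ≠ 0) (h : (y • A - vecMulVec v (star v)).PosSemidef) :
    star v ⬝ᵥ v ≤ (y : 𝕜) := by
  obtain ⟨N, hN0, hN⟩ := RCLike.pos_iff_exists_ofReal.1 (dotProduct_star_self_pos_iff.2 hv)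
  obtain ⟨a, ha0, ha⟩ := RCLike.nonneg_iff_exists_ofReal.1 (hA.dotProduct_mulVec_nonneg v)
  have haN : a ≤ N := by
    have := hA₁.dotProduct_mulVec_nonneg v
    rwa [sub_mulVec, one_mulVec, dotProduct_sub, ← ha, ← hN, sub_nonneg,
      RCLike.ofReal_le_ofReal] at this
  have hNa : N * N ≤ y * a := by
    have := h.dotProduct_mulVec_nonneg v
    rwa [sub_mulVec, dotProduct_sub, vecMulVec_mulVec, smul_mulVec, dotProduct_smul, ← ha,
      dotProduct_smul, ← hN, sub_nonneg, MulOpposite.smul_eq_mul_unop, MulOpposite.unop_op,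
      RCLike.real_smul_eq_coe_mul, ← RCLike.ofReal_mul, ← RCLike.ofReal_mul,
      RCLike.ofReal_le_ofReal] at this
  rw [← hN, RCLike.ofReal_le_ofReal]
  have hy : 0 < y := by nlinarith
  exact le_of_mul_le_mul_right (hNa.trans (mul_le_mul_of_nonneg_left haN hy.le)) hN0

end

/-- If `y·[[α, ξe^{iφ}],[ξe^{−iφ}, β]] − [[1, √(1−λ)],[√(1−λ), 1−λ]]` is
positive semidefinite under the stated constraints, then `y ≥ 2 − λ`. -/
theorem stmt4 (l α β ξ φ y : ℝ)
    (hl : l ∈ Set.Icc (0:ℝ) 1) (hα : α ∈ Set.Icc (0:ℝ) 1) (hβ : β ∈ Set.Icc (0:ℝ) 1)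
    (hξ : 0 ≤ ξ) (hξ2 : ξ ^ 2 ≤ min (α * β) ((1 - α) * (1 - β)))
    (hpsd : (y • !![(α : ℂ), (ξ : ℂ) * Complex.exp (Complex.I * φ);
                    (ξ : ℂ) * Complex.exp (-(Complex.I * φ)), (β : ℂ)]
        - !![(1 : ℂ), ((Real.sqrt (1 - l) : ℝ) : ℂ);
             ((Real.sqrt (1 - l) : ℝ) : ℂ), ((1 - l : ℝ) : ℂ)]).PosSemidef) :
    2 - l ≤ y := by
  set z : ℂ := ξ * Complex.exp (Complex.I * φ)
  have hz : ‖z‖ ^ 2 = ξ ^ 2 := by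
    simp [z, mul_comm Complex.I, Complex.norm_exp_ofReal_mul_I, abs_of_nonneg hξ]
  have hz_star : star z = ξ * Complex.exp (-(Complex.I * φ)) := by
    simp [z, ← Complex.exp_conj]
  have hA : (!![(α : ℂ), z; star z, (β : ℂ)]).PosSemidef :=
    posSemidef_fin_two hα.1 hβ.1 (hz ▸ hξ2.trans (min_le_left _ _))
  have hA₁ : (1 - !![(α : ℂ), z; star z, (β : ℂ)]).PosSemidef :=
    posSemidef_one_sub_fin_two hα.2 hβ.2 (hz ▸ hξ2.trans (min_le_right _ _))
  set s := Real.sqrt (1 - l)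
  have hs : s * s = 1 - l := Real.mul_self_sqrt (sub_nonneg.2 hl.2)
  have hB : !![(1 : ℂ), (s : ℂ); (s : ℂ), ((1 - l : ℝ) : ℂ)]
      = vecMulVec ![1, (s : ℂ)] (star ![1, (s : ℂ)]) := by
    ext i j
    fin_cases i <;> fin_cases j <;> simp [vecMulVec, ← hs]
  have hv : star ![1, (s : ℂ)] ⬝ᵥ ![1, (s : ℂ)] = ((2 - l : ℝ) : ℂ) := by
    rw [show 2 - l = 1 + s * s by linarith]
    simp [dotProduct]
  rw [hB, ← hz_star] at hpsd
  have key := star_dotProduct_self_le_of_posSemidef_smul_sub_vecMulVec hA hA₁ (by simp) hpsd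
  rw [hv] at key
  exact RCLike.ofReal_le_ofReal.1 key
end

section
/- Let λ ∈ [0,1] and let ν, ξ be real numbers with 0 ≤ ξ < ν and ν + ξ ≤ 1. Define f₀(μ) := (ν(2−λ) − λμ − 2ξ√(1−λ)) / (ν² − ξ² − μ²). Then the infimum of f₀(μ) over μ ∈ [0, √(ν²−ξ²)) equals max{ (1−√(1−λ))² / (2(ν−ξ)), (1+√(1−λ))² / (2(ν+ξ)) }. -/
open scoped Kronecker ComplexOrder
open Matrix

noncomputable section

lemma aux6 (ν ξ s : ℝ) (h1 : 0 < ν - ξ) (h2 : 0 < ν + ξ) (hs : -1 ≤ s) (hs' : s ≤ 1)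
    (hAB : (1 + s) ^ 2 / (2 * (ν + ξ)) ≤ (1 - s) ^ 2 / (2 * (ν - ξ))) :
    sInf {v : ℝ | ∃ μ : ℝ, 0 ≤ μ ∧ μ < Real.sqrt (ν ^ 2 - ξ ^ 2) ∧
        v = (ν * (1 + s ^ 2) - (1 - s ^ 2) * μ - 2 * ξ * s) / (ν ^ 2 - ξ ^ 2 - μ ^ 2)}
      = (1 - s) ^ 2 / (2 * (ν - ξ)) := by
  have hd : 0 < ν ^ 2 - ξ ^ 2 := by nlinarith
  have hs1 : s < 1 := by
    rcases lt_or_eq_of_le hs' with h | h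
    · exact h
    · exfalso
      subst h
      have h0 : ((1:ℝ) - 1) ^ 2 / (2 * (ν - ξ)) = 0 := by norm_num
      have h4 : (0:ℝ) < ((1:ℝ) + 1) ^ 2 / (2 * (ν + ξ)) := by positivity
      linarith [hAB, h0, h4]
  have h1s : 0 < 1 - s := by linarith
  have hAB' : (1 + s) ^ 2 * (2 * (ν - ξ)) ≤ (1 - s) ^ 2 * (2 * (ν + ξ)) := by
    rwa [div_le_div_iff₀ (by linarith) (by linarith)] at hAB
  obtain ⟨μ₀, hμval, hμ₀0, hμ₀sq⟩ : ∃ μ₀ : ℝ, (1 - s) * μ₀ = (ν - ξ) * (1 + s) ∧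
      0 ≤ μ₀ ∧ μ₀ ^ 2 ≤ ν ^ 2 - ξ ^ 2 := by
    refine ⟨(ν - ξ) * (1 + s) / (1 - s), by field_simp,
      div_nonneg (mul_nonneg h1.le (by linarith)) h1s.le, ?_⟩
    rw [div_pow, div_le_iff₀ (by positivity)]
    nlinarith [mul_le_mul_of_nonneg_left hAB' h1.le]
  have hroot : 0 < Real.sqrt (ν ^ 2 - ξ ^ 2) := Real.sqrt_pos.mpr hd
  have hne : Set.Nonempty {v : ℝ | ∃ μ : ℝ, 0 ≤ μ ∧ μ < Real.sqrt (ν ^ 2 - ξ ^ 2) ∧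
      v = (ν * (1 + s ^ 2) - (1 - s ^ 2) * μ - 2 * ξ * s) / (ν ^ 2 - ξ ^ 2 - μ ^ 2)} :=
    ⟨_, ⟨0, le_refl 0, hroot, rfl⟩⟩
  have hlb : ∀ v ∈ {v : ℝ | ∃ μ : ℝ, 0 ≤ μ ∧ μ < Real.sqrt (ν ^ 2 - ξ ^ 2) ∧
      v = (ν * (1 + s ^ 2) - (1 - s ^ 2) * μ - 2 * ξ * s) / (ν ^ 2 - ξ ^ 2 - μ ^ 2)},
      (1 - s) ^ 2 / (2 * (ν - ξ)) ≤ v := by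
    rintro v ⟨μ, hμ0, hμlt, rfl⟩
    have hμsq : μ ^ 2 < ν ^ 2 - ξ ^ 2 := (Real.lt_sqrt hμ0).mp hμlt
    have hD : 0 < ν ^ 2 - ξ ^ 2 - μ ^ 2 := by linarith
    rw [div_le_div_iff₀ (by linarith) hD]
    nlinarith [sq_nonneg ((ν - ξ) * (1 + s) - (1 - s) * μ)]
  refine le_antisymm ?_ (le_csInf hne hlb)
  rw [Real.sInf_le_iff ⟨_, hlb⟩ hne]
  intro ε hε
  obtain ⟨C, hC, hC0⟩ : ∃ C : ℝ, C * (2 * (ν - ξ) * (ν ^ 2 - ξ ^ 2)) = (1 - s) ^ 2 * μ₀ ^ 2 ∧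
      0 ≤ C := by
    refine ⟨(1 - s) ^ 2 * μ₀ ^ 2 / (2 * (ν - ξ) * (ν ^ 2 - ξ ^ 2)), by field_simp, by positivity⟩
  obtain ⟨δ, hδ0, hδ1, hCδ⟩ : ∃ δ : ℝ, 0 < δ ∧ δ ≤ 1 ∧ C * δ < ε := by
    refine ⟨min 1 (ε / (C + 1)), lt_min one_pos (div_pos hε (by linarith)),
      min_le_left _ _, ?_⟩
    have h' : min 1 (ε / (C + 1)) * (C + 1) ≤ ε := by
      have := min_le_right 1 (ε / (C + 1))
      rw [le_div_iff₀ (by linarith)] at this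
      exact this
    nlinarith [lt_min one_pos (div_pos hε (show (0:ℝ) < C + 1 by linarith))]
  set μ : ℝ := (1 - δ) * μ₀ with hμdef
  have hμ0 : 0 ≤ μ := mul_nonneg (by linarith) hμ₀0
  have h1δ : (1 - δ) ^ 2 ≤ 1 - δ := by nlinarith
  have hμμ : μ ^ 2 ≤ (1 - δ) * (ν ^ 2 - ξ ^ 2) := by
    have := mul_le_mul h1δ hμ₀sq (sq_nonneg μ₀) (by linarith : (0:ℝ) ≤ 1 - δ)
    calc μ ^ 2 = (1 - δ) ^ 2 * μ₀ ^ 2 := by rw [hμdef]; ring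
    _ ≤ (1 - δ) * (ν ^ 2 - ξ ^ 2) := this
  have hμsq : μ ^ 2 < ν ^ 2 - ξ ^ 2 := by linarith [hμμ, mul_pos hδ0 hd]
  have hD : 0 < ν ^ 2 - ξ ^ 2 - μ ^ 2 := by linarith
  have hDge : δ * (ν ^ 2 - ξ ^ 2) ≤ ν ^ 2 - ξ ^ 2 - μ ^ 2 := by linarith [hμμ, mul_pos hδ0 hd]
  refine ⟨_, ⟨μ, hμ0, (Real.lt_sqrt hμ0).mpr hμsq, rfl⟩, ?_⟩
  -- key square bound
  have hsq2 : ((1 - s) * δ * μ₀) ^ 2 < 2 * (ν - ξ) * ε * (ν ^ 2 - ξ ^ 2 - μ ^ 2) := by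
    have e1 : ((1 - s) * δ * μ₀) ^ 2 = (C * δ) * (2 * (ν - ξ) * (ν ^ 2 - ξ ^ 2) * δ) := by
      rw [show (C * δ) * (2 * (ν - ξ) * (ν ^ 2 - ξ ^ 2) * δ)
          = (C * (2 * (ν - ξ) * (ν ^ 2 - ξ ^ 2))) * δ ^ 2 by ring, hC]; ring
    have hpos : 0 < 2 * (ν - ξ) * (ν ^ 2 - ξ ^ 2) * δ := by positivity
    have e2 : (C * δ) * (2 * (ν - ξ) * (ν ^ 2 - ξ ^ 2) * δ)
        < ε * (2 * (ν - ξ) * (ν ^ 2 - ξ ^ 2) * δ) := by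
      exact mul_lt_mul_of_pos_right hCδ hpos
    have e3 : ε * (2 * (ν - ξ) * (ν ^ 2 - ξ ^ 2) * δ)
        ≤ 2 * (ν - ξ) * ε * (ν ^ 2 - ξ ^ 2 - μ ^ 2) := by
      linarith only [mul_le_mul_of_nonneg_left hDge
        (by positivity : (0:ℝ) ≤ 2 * (ν - ξ) * ε)]
    linarith only [e1, e2, e3]
  have hNid : 2 * (ν - ξ) * (ν * (1 + s ^ 2) - (1 - s ^ 2) * μ - 2 * ξ * s)
      = (1 - s) ^ 2 * (ν ^ 2 - ξ ^ 2 - μ ^ 2) + ((1 - s) * δ * μ₀) ^ 2 := by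
    rw [hμdef]
    linear_combination (-((ν - ξ) * (1 + s) - (1 - 2 * δ) * ((1 - s) * μ₀))) * hμval
  have main : 2 * (ν - ξ) * (ν * (1 + s ^ 2) - (1 - s ^ 2) * μ - 2 * ξ * s)
      < ((1 - s) ^ 2 + 2 * (ν - ξ) * ε) * (ν ^ 2 - ξ ^ 2 - μ ^ 2) := by
    linarith only [hNid, hsq2]
  rw [div_lt_iff₀ hD]
  have hA2 : 2 * (ν - ξ) * ((1 - s) ^ 2 / (2 * (ν - ξ))) = (1 - s) ^ 2 := by field_simp
  have hA2D : (2 * (ν - ξ) * ((1 - s) ^ 2 / (2 * (ν - ξ)))) * (ν ^ 2 - ξ ^ 2 - μ ^ 2)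
      = (1 - s) ^ 2 * (ν ^ 2 - ξ ^ 2 - μ ^ 2) := by rw [hA2]
  have step : 2 * (ν - ξ) * (ν * (1 + s ^ 2) - (1 - s ^ 2) * μ - 2 * ξ * s)
      < 2 * (ν - ξ) * (((1 - s) ^ 2 / (2 * (ν - ξ)) + ε) * (ν ^ 2 - ξ ^ 2 - μ ^ 2)) := by
    linarith only [main, hA2D]
  exact lt_of_mul_lt_mul_left (by linarith only [step]) (by linarith : (0:ℝ) ≤ 2 * (ν - ξ))

/-- The infimum of
`f₀(μ) = (ν(2−λ) − λμ − 2ξ√(1−λ)) / (ν² − ξ² − μ²)` over `μ ∈ [0, √(ν²−ξ²))` equals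
`max{(1−√(1−λ))²/(2(ν−ξ)), (1+√(1−λ))²/(2(ν+ξ))}`. -/
theorem stmt6 (l ν ξ : ℝ) (hl : l ∈ Set.Icc (0:ℝ) 1)
    (hξ0 : 0 ≤ ξ) (hξν : ξ < ν) (hsum : ν + ξ ≤ 1) :
    sInf {v : ℝ | ∃ μ : ℝ, 0 ≤ μ ∧ μ < Real.sqrt (ν ^ 2 - ξ ^ 2) ∧
        v = (ν * (2 - l) - l * μ - 2 * ξ * Real.sqrt (1 - l)) / (ν ^ 2 - ξ ^ 2 - μ ^ 2)}
      = max ((1 - Real.sqrt (1 - l)) ^ 2 / (2 * (ν - ξ)))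
            ((1 + Real.sqrt (1 - l)) ^ 2 / (2 * (ν + ξ))) := by
  obtain ⟨hl0, hl1⟩ := hl
  set s := Real.sqrt (1 - l) with hsdef
  have hs2 : s ^ 2 = 1 - l := Real.sq_sqrt (by linarith)
  have hs0 : 0 ≤ s := Real.sqrt_nonneg _
  have hs1 : s ≤ 1 := by nlinarith [hs2, hs0]
  have hset : {v : ℝ | ∃ μ : ℝ, 0 ≤ μ ∧ μ < Real.sqrt (ν ^ 2 - ξ ^ 2) ∧
        v = (ν * (2 - l) - l * μ - 2 * ξ * s) / (ν ^ 2 - ξ ^ 2 - μ ^ 2)}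
      = {v : ℝ | ∃ μ : ℝ, 0 ≤ μ ∧ μ < Real.sqrt (ν ^ 2 - ξ ^ 2) ∧
        v = (ν * (1 + s ^ 2) - (1 - s ^ 2) * μ - 2 * ξ * s) / (ν ^ 2 - ξ ^ 2 - μ ^ 2)} := by
    ext v
    simp only [Set.mem_setOf_eq]
    constructor <;> rintro ⟨μ, a, b, c⟩ <;> refine ⟨μ, a, b, ?_⟩ <;> rw [c] <;> congr 1
    · linear_combination (-(ν + μ)) * hs2
    · linear_combination (ν + μ) * hs2
  rcases le_total ((1 + s) ^ 2 / (2 * (ν + ξ))) ((1 - s) ^ 2 / (2 * (ν - ξ))) with hc | hc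
  · rw [max_eq_left hc, hset]
    exact aux6 ν ξ s (by linarith) (by linarith) (by linarith) hs1 hc
  · rw [max_eq_right hc, hset]
    have h := aux6 ν (-ξ) (-s) (by linarith) (by linarith) (by linarith) (by linarith)
      (by rw [show (1:ℝ) + -s = 1 - s by ring, show 2 * (ν + -ξ) = 2 * (ν - ξ) by ring,
              show (1:ℝ) - -s = 1 + s by ring, show 2 * (ν - -ξ) = 2 * (ν + ξ) by ring]
          exact hc)
    simp only [neg_sq, mul_neg, neg_mul, neg_neg, sub_neg_eq_add] at h
    exact h
end
end

section
/- Let λ ∈ (0,1]. For x, y ∈ (0,1] with 1 − x(1+y)/2 + √((1−x)(1−xy)) > 0, define f₁(x,y) := (1−√(1−λ))²/(2xy), f₂(x) := (1+√(1−λ))²/(2x), and f₃(x,y) := λ / (1 − x(1+y)/2 + √((1−x)(1−xy))). Then the infimum of max{f₁(x,y), f₂(x), f₃(x,y)} over all such (x,y) equals (1+√(1−λ))²/2 if λ ≤ (√5−1)/2, and equals (1+λ)/(2λ) if λ ≥ (√5−1)/2. -/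
/-!
Write `s = √(1 - λ)`, so `s² = 1 - λ`, and note `D(x, y) = (√(1 - x) + √(1 - xy))² / 2` for the
denominator of `f₃`. As `x ≤ 1`, always `f₂ ≥ (1 + s)² / 2`; at `x = 1`, `y = ((1 - s)/(1 + s))²`
one has `f₁ = f₂ = (1 + s)² / 2`, and `f₃` is no larger exactly when `λ ≤ s`, i.e. `λ² + λ ≤ 1`.
Otherwise let `c = (1 + λ)/(2λ)`: if `f₁, f₂ < c`, then `(1 + λ)(1 - x) < (λ - s)²` and
`(1 + λ)(1 - xy) < (λ + s)²`, so `(1 + λ) D < (2λ)² / 2` and `f₃ > c`. All three equal `c` at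
`x = λ(1 + s)²/(1 + λ)` with the same `y`.
-/

noncomputable section

namespace InfMax

open Real Set

variable {l s x y : ℝ}

def f₁ (s x y : ℝ) : ℝ := (1 - s) ^ 2 / (2 * x * y)

def f₂ (s x : ℝ) : ℝ := (1 + s) ^ 2 / (2 * x)

def D (x y : ℝ) : ℝ := 1 - x * (1 + y) / 2 + √((1 - x) * (1 - x * y))

def f₃ (l x y : ℝ) : ℝ := l / D x y

def objective (l s x y : ℝ) : ℝ := max (max (f₁ s x y) (f₂ s x)) (f₃ l x y)

def objectiveValues (l s : ℝ) : Set ℝ :=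
  {v | ∃ x y : ℝ, x ∈ Ioc 0 1 ∧ y ∈ Ioc 0 1 ∧ 0 < D x y ∧ v = objective l s x y}

def y₀ (s : ℝ) : ℝ := ((1 - s) / (1 + s)) ^ 2

def x₀ (l s : ℝ) : ℝ := l * (1 + s) ^ 2 / (1 + l)

theorem le_sqrt_five_sub_one_div_two_iff (hl : 0 ≤ l) :
    l ≤ (√5 - 1) / 2 ↔ l ^ 2 + l ≤ 1 := by
  rw [le_div_iff₀ two_pos, le_sub_iff_add_le, le_sqrt (by positivity) (by norm_num)]
  constructor <;> intro h <;> nlinarith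

theorem sqrt_five_sub_one_div_two_le_iff (hl : 0 ≤ l) :
    (√5 - 1) / 2 ≤ l ↔ 1 ≤ l ^ 2 + l := by
  rw [div_le_iff₀ two_pos, sub_le_iff_le_add, sqrt_le_left (by positivity)]
  constructor <;> intro h <;> nlinarith

theorem mul_D_eq {k : ℝ} (hk : 0 ≤ k) (hx : x ≤ 1) (hxy : x * y ≤ 1) :
    k * D x y = (√(k * (1 - x)) + √(k * (1 - x * y))) ^ 2 / 2 := by
  have h₁ : 0 ≤ 1 - x := by linarith
  have h₂ : 0 ≤ 1 - x * y := by linarith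
  rw [add_sq, sq_sqrt (mul_nonneg hk h₁), sq_sqrt (mul_nonneg hk h₂), sqrt_mul hk,
    sqrt_mul hk, D, sqrt_mul h₁]
  have hk' : √k * √k = k := mul_self_sqrt hk
  linear_combination (-(√(1 - x) * √(1 - x * y))) * hk'

theorem y₀_mem_Ioc (hs₀ : 0 ≤ s) (hs₁ : s < 1) : y₀ s ∈ Ioc 0 1 := by
  have h₁ : 0 < 1 - s := by linarith
  have h₂ : (1 - s) / (1 + s) ≤ 1 := (div_le_one (by linarith)).2 (by linarith)
  exact ⟨by unfold y₀; positivity, pow_le_one₀ (by positivity) h₂⟩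

theorem f₁_y₀_eq_f₂ (hs₀ : 0 ≤ s) (hs₁ : s < 1) : f₁ s x (y₀ s) = f₂ s x := by
  have : 1 - s ≠ 0 := by linarith
  have : 1 + s ≠ 0 := by linarith
  unfold f₁ f₂ y₀
  field_simp

theorem D_one_y₀ (hs₀ : 0 ≤ s) : D 1 (y₀ s) = 2 * s / (1 + s) ^ 2 := by
  have : 1 + s ≠ 0 := by linarith
  simp only [D, y₀, sub_self, zero_mul, sqrt_zero, add_zero]
  field_simp
  ring

theorem one_add_sq_div_two_le_objective (hx₀ : 0 < x) (hx₁ : x ≤ 1) :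
    (1 + s) ^ 2 / 2 ≤ objective l s x y := by
  have : (1 + s) ^ 2 / 2 ≤ f₂ s x :=
    div_le_div_of_nonneg_left (sq_nonneg _) (by positivity) (by linarith)
  exact this.trans ((le_max_right _ _).trans (le_max_left _ _))

theorem isLeast_objectiveValues_of_le (hl : 0 < l) (hs2 : s ^ 2 = 1 - l) (hls : l ≤ s) :
    IsLeast (objectiveValues l s) ((1 + s) ^ 2 / 2) := by
  have hs : 0 < s := hl.trans_le hls
  have hs₀ : 0 ≤ s := hs.le
  have hs₁ : s < 1 := by nlinarith
  refine ⟨⟨1, y₀ s, ⟨one_pos, le_rfl⟩, y₀_mem_Ioc hs₀ hs₁, ?_, ?_⟩, ?_⟩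
  · rw [D_one_y₀ hs₀]
    positivity
  · have hf₃ : f₃ l 1 (y₀ s) ≤ (1 + s) ^ 2 / 2 := by
      rw [f₃, D_one_y₀ hs₀, div_le_iff₀ (by positivity)]
      calc l ≤ s := hls
        _ = (1 + s) ^ 2 / 2 * (2 * s / (1 + s) ^ 2) := by field_simp
    have hf₂ : f₂ s 1 = (1 + s) ^ 2 / 2 := by rw [f₂, mul_one]
    rw [objective, f₁_y₀_eq_f₂ hs₀ hs₁, max_self, hf₂, max_eq_left hf₃]
  · rintro v ⟨x, y, ⟨hx₀, hx₁⟩, -, -, rfl⟩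
    exact one_add_sq_div_two_le_objective hx₀ hx₁

theorem one_add_mul_one_sub_x₀ (hl : 0 < l) (hs2 : s ^ 2 = 1 - l) :
    (1 + l) * (1 - x₀ l s) = (l - s) ^ 2 := by
  have : 1 + l ≠ 0 := by linarith
  unfold x₀
  field_simp
  linear_combination (-1 - l) * hs2

theorem one_add_mul_one_sub_x₀_mul_y₀ (hl : 0 < l) (hs₀ : 0 ≤ s) (hs2 : s ^ 2 = 1 - l) :
    (1 + l) * (1 - x₀ l s * y₀ s) = (l + s) ^ 2 := by
  have : 1 + l ≠ 0 := by linarith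
  have : 1 + s ≠ 0 := by linarith
  unfold x₀ y₀
  field_simp
  linear_combination (-1 - l) * hs2

theorem D_x₀_y₀ (hl : 0 < l) (hs₀ : 0 ≤ s) (hs2 : s ^ 2 = 1 - l) (hsl : s ≤ l) :
    D (x₀ l s) (y₀ s) = 2 * l ^ 2 / (1 + l) := by
  have hx := one_add_mul_one_sub_x₀ hl hs2
  have hxy := one_add_mul_one_sub_x₀_mul_y₀ hl hs₀ hs2
  have hl' : 0 < 1 + l := by linarith
  rw [eq_div_iff hl'.ne', mul_comm, mul_D_eq hl'.le (by nlinarith) (by nlinarith), hx, hxy,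
    sqrt_sq (sub_nonneg.2 hsl), sqrt_sq (by linarith)]
  ring

theorem one_add_div_two_mul_le_objective (hl : 0 < l) (hs₀ : 0 ≤ s) (hs2 : s ^ 2 = 1 - l)
    (hsl : s ≤ l) (hx₀ : 0 < x) (hx₁ : x ≤ 1) (hy₀ : 0 < y) (hy₁ : y ≤ 1) (hD : 0 < D x y) :
    (1 + l) / (2 * l) ≤ objective l s x y := by
  by_contra! h
  simp only [objective, max_lt_iff] at h
  obtain ⟨⟨h₁, h₂⟩, h₃⟩ := h
  rw [f₁, div_lt_div_iff₀ (by positivity) (by positivity)] at h₁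
  rw [f₂, div_lt_div_iff₀ (by positivity) (by positivity)] at h₂
  rw [f₃, div_lt_div_iff₀ hD (by positivity)] at h₃
  have hxy : x * y ≤ 1 := mul_le_one₀ hx₁ hy₀.le hy₁
  have ha : √((1 + l) * (1 - x)) < l - s := by
    rw [← sqrt_sq (sub_nonneg.2 hsl)]
    exact sqrt_lt_sqrt (by nlinarith) (by nlinarith)
  have hb : √((1 + l) * (1 - x * y)) < l + s := by
    rw [← sqrt_sq (by linarith : 0 ≤ l + s)]
    exact sqrt_lt_sqrt (by nlinarith) (by nlinarith)
  have hD' : (1 + l) * D x y < 2 * l ^ 2 := by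
    rw [mul_D_eq (by linarith) hx₁ hxy]
    have := pow_lt_pow_left₀ (add_lt_add ha hb) (by positivity) two_ne_zero
    linarith
  linarith

theorem isLeast_objectiveValues_of_ge (hl : 0 < l) (hs₀ : 0 ≤ s) (hs2 : s ^ 2 = 1 - l)
    (hsl : s ≤ l) : IsLeast (objectiveValues l s) ((1 + l) / (2 * l)) := by
  have hs₁ : s < 1 := by nlinarith
  have hx₀ : x₀ l s ∈ Ioc 0 1 :=
    ⟨by unfold x₀; positivity,
      by nlinarith [one_add_mul_one_sub_x₀ hl hs2, sq_nonneg (l - s)]⟩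
  have hf₂ : f₂ s (x₀ l s) = (1 + l) / (2 * l) := by
    have : 1 + s ≠ 0 := by linarith
    unfold f₂ x₀
    field_simp
  have hf₃ : f₃ l (x₀ l s) (y₀ s) = (1 + l) / (2 * l) := by
    rw [f₃, D_x₀_y₀ hl hs₀ hs2 hsl]
    field_simp
  refine ⟨⟨x₀ l s, y₀ s, hx₀, y₀_mem_Ioc hs₀ hs₁, ?_, ?_⟩, ?_⟩
  · rw [D_x₀_y₀ hl hs₀ hs2 hsl]
    positivity
  · rw [objective, f₁_y₀_eq_f₂ hs₀ hs₁, hf₂, hf₃, max_self, max_self]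
  · rintro v ⟨x, y, ⟨hx₀, hx₁⟩, ⟨hy₀, hy₁⟩, hD, rfl⟩
    exact one_add_div_two_mul_le_objective hl hs₀ hs2 hsl hx₀ hx₁ hy₀ hy₁ hD

end InfMax

open InfMax in
/-- The infimum of `max{f₁(x,y), f₂(x), f₃(x,y)}` over
`x, y ∈ (0,1]` with positive denominator equals `(1+√(1−λ))²/2` if `λ ≤ (√5−1)/2` and
`(1+λ)/(2λ)` if `λ ≥ (√5−1)/2`. -/
theorem stmt7 (l : ℝ) (hl : l ∈ Set.Ioc (0:ℝ) 1) :
    (l ≤ (Real.sqrt 5 - 1) / 2 →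
      sInf {v : ℝ | ∃ x y : ℝ, x ∈ Set.Ioc (0:ℝ) 1 ∧ y ∈ Set.Ioc (0:ℝ) 1 ∧
          0 < 1 - x * (1 + y) / 2 + Real.sqrt ((1 - x) * (1 - x * y)) ∧
          v = max (max ((1 - Real.sqrt (1 - l)) ^ 2 / (2 * x * y))
                       ((1 + Real.sqrt (1 - l)) ^ 2 / (2 * x)))
                  (l / (1 - x * (1 + y) / 2 + Real.sqrt ((1 - x) * (1 - x * y))))}
        = (1 + Real.sqrt (1 - l)) ^ 2 / 2) ∧
    ((Real.sqrt 5 - 1) / 2 ≤ l →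
      sInf {v : ℝ | ∃ x y : ℝ, x ∈ Set.Ioc (0:ℝ) 1 ∧ y ∈ Set.Ioc (0:ℝ) 1 ∧
          0 < 1 - x * (1 + y) / 2 + Real.sqrt ((1 - x) * (1 - x * y)) ∧
          v = max (max ((1 - Real.sqrt (1 - l)) ^ 2 / (2 * x * y))
                       ((1 + Real.sqrt (1 - l)) ^ 2 / (2 * x)))
                  (l / (1 - x * (1 + y) / 2 + Real.sqrt ((1 - x) * (1 - x * y))))}
        = (1 + l) / (2 * l)) := by
  obtain ⟨hl₀, hl₁⟩ := hl
  have hs₀ : 0 ≤ √(1 - l) := Real.sqrt_nonneg _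
  have hs2 : √(1 - l) ^ 2 = 1 - l := Real.sq_sqrt (by linarith)
  refine ⟨fun h => (isLeast_objectiveValues_of_le hl₀ hs2 ?_).csInf_eq,
    fun h => (isLeast_objectiveValues_of_ge hl₀ hs₀ hs2 ?_).csInf_eq⟩
  · have := (le_sqrt_five_sub_one_div_two_iff hl₀.le).1 h
    exact (sq_le_sq₀ hl₀.le hs₀).1 (by linarith)
  · have := (sqrt_five_sub_one_div_two_le_iff hl₀.le).1 h
    exact (sq_le_sq₀ hs₀ hl₀.le).1 (by linarith)
end
end

section
/- Let λ ∈ (0,1]. Every triple of real numbers (α, β, x) satisfying: α + 2x²/λ ≤ β + λ/2, α ≥ 1/2, β ≥ (1−λ)/2, x ≥ 0, and (α − 1/2)·(β − (1−λ)/2) ≥ (min{ min{√(αβ), x} − (1/2)√(1−λ), 0 })², satisfies β + λ/2 ≥ 1 − λ/2 (equivalently, β ≥ 1 − λ). -/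
open scoped Kronecker ComplexOrder
open Matrix

noncomputable section

lemma stmt11_aux (l t b a x : ℝ) (hl0 : 0 < l) (hl1 : l < 1)
    (ht2 : t ^ 2 = (1 - l) / 4) (ht0 : 0 < t) (hx0 : 0 ≤ x) (hx : x < t)
    (ha0 : 0 ≤ a) (hb0 : 0 ≤ b) (hb : b < (1 - l) / 2)
    (h5 : (x - t) ^ 2 ≤ a * b) (h1 : a * l + 2 * x ^ 2 ≤ b * l) : False := by
  have key1 : l * (x - t) ^ 2 ≤ b ^ 2 * l - 2 * b * x ^ 2 := by
    nlinarith [mul_le_mul_of_nonneg_left h5 hl0.le,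
      mul_le_mul_of_nonneg_left h1 hb0]
  have key2 : ((l + 2 * b) * x - l * t) ^ 2 ≤ l * b * (l * b + 2 * b ^ 2 - 2 * t ^ 2) := by
    nlinarith [mul_le_mul_of_nonneg_left key1 (by linarith : (0:ℝ) ≤ l + 2 * b)]
  have hN : l * b + 2 * b ^ 2 - 2 * t ^ 2 < 0 := by nlinarith
  rcases hb0.eq_or_lt with hbz | hbz
  · have h0 : (l * x - l * t) ^ 2 ≤ 0 := by nlinarith [key2]
    nlinarith [mul_pos hl0 (by linarith : 0 < t - x), sq_nonneg (l * x - l * t)]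
  · have : l * b * (l * b + 2 * b ^ 2 - 2 * t ^ 2) < 0 :=
      mul_neg_of_pos_of_neg (mul_pos hl0 hbz) hN
    nlinarith [sq_nonneg ((l + 2 * b) * x - l * t)]

/-- Every feasible triple `(α, β, x)` of the second branch satisfies
`β + λ/2 ≥ 1 − λ/2`. -/
theorem stmt11 (l α β x : ℝ) (hl : l ∈ Set.Ioc (0:ℝ) 1)
    (h1 : α + 2 * x ^ 2 / l ≤ β + l / 2) (h2 : 1 / 2 ≤ α) (h3 : (1 - l) / 2 ≤ β)
    (h4 : 0 ≤ x)
    (h5 : (min (min (Real.sqrt (α * β)) x - Real.sqrt (1 - l) / 2) 0) ^ 2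
      ≤ (α - 1 / 2) * (β - (1 - l) / 2)) :
    1 - l / 2 ≤ β + l / 2 := by
  obtain ⟨hl0, hl1⟩ := hl
  -- rewrite h1 without division
  have h1' : α * l + 2 * x ^ 2 ≤ (β + l / 2) * l := by
    have := (div_le_iff₀ hl0).mp (by linarith : 2 * x ^ 2 / l ≤ β + l / 2 - α)
    nlinarith
  rcases eq_or_lt_of_le hl1 with hl1 | hl1
  · -- l = 1 : trivial from h3
    subst hl1; linarith
  have hs2 : Real.sqrt (1 - l) ^ 2 = 1 - l := Real.sq_sqrt (by linarith)
  have hspos : 0 < Real.sqrt (1 - l) := Real.sqrt_pos.mpr (by linarith)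
  rcases le_or_gt (Real.sqrt (1 - l) / 2) x with hx | hx
  · -- x large: directly from h1
    nlinarith [sq_nonneg (1 - l), mul_le_mul_of_nonneg_left hx hspos.le,
      sq_nonneg (x - Real.sqrt (1 - l) / 2)]
  · -- x < s/2
    have hprod : (1:ℝ) / 2 * ((1 - l) / 2) ≤ α * β :=
      mul_le_mul h2 h3 (by linarith) (by linarith)
    have hsab : Real.sqrt (1 - l) / 2 ≤ Real.sqrt (α * β) := by
      rw [Real.le_sqrt (by positivity)]
      · nlinarith
      · nlinarith
    have hmin1 : min (Real.sqrt (α * β)) x = x := min_eq_right (le_trans hx.le hsab)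
    have hmin2 : min (x - Real.sqrt (1 - l) / 2) 0 = x - Real.sqrt (1 - l) / 2 :=
      min_eq_left (by linarith)
    rw [hmin1, hmin2] at h5
    by_contra hc
    push_neg at hc
    refine stmt11_aux l (Real.sqrt (1 - l) / 2) (β - (1 - l) / 2) (α - 1 / 2) x hl0 hl1
      (by nlinarith) (by positivity) h4 hx (by linarith) (by linarith) (by linarith)
      h5 (by nlinarith)
end
end

section
/- For every λ ∈ (0,1), the function z ↦ z² + √( 4(1−λz)² / ((1−λ)λ²) + z⁴ ) on ℝ attains its minimum at z = 1, and the minimum value equals 2/λ. -/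
/-
The radicand is a perfect square plus a nonnegative defect:
`4(1 - λz)²/((1 - λ)λ²) + z⁴ = (2/λ - z²)² + 4(z - 1)²/(λ(1 - λ))`.
Hence the square root is at least `2/λ - z²`, so the function is at least `2/λ`, and at `z = 1` the
defect vanishes and the bound is attained.
-/

theorem le_add_sqrt_of_sq_sub_le {a b c : ℝ} (h : (c - a) ^ 2 ≤ b) : c ≤ a + √b := by
  have := (le_abs_self (c - a)).trans (Real.abs_le_sqrt h)
  linarith

namespace Stmt15

noncomputable def objective (l z : ℝ) : ℝ :=
  z ^ 2 + √(4 * (1 - l * z) ^ 2 / ((1 - l) * l ^ 2) + z ^ 4)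

theorem radicand_eq_sq_add (l z : ℝ) (hl₀ : l ≠ 0) (hl₁ : l ≠ 1) :
    4 * (1 - l * z) ^ 2 / ((1 - l) * l ^ 2) + z ^ 4
      = (2 / l - z ^ 2) ^ 2 + 4 * (z - 1) ^ 2 / (l * (1 - l)) := by
  have : 1 - l ≠ 0 := sub_ne_zero.mpr hl₁.symm
  field_simp
  ring

theorem le_objective {l : ℝ} (hl : l ∈ Set.Ioo (0 : ℝ) 1) (z : ℝ) : 2 / l ≤ objective l z := by
  obtain ⟨hl₀, hl₁⟩ := hl
  refine le_add_sqrt_of_sq_sub_le ?_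
  rw [radicand_eq_sq_add l z hl₀.ne' hl₁.ne]
  have : 0 ≤ 4 * (z - 1) ^ 2 / (l * (1 - l)) := by
    have : 0 < 1 - l := by linarith
    positivity
  linarith

theorem objective_one {l : ℝ} (hl : l ∈ Set.Ioo (0 : ℝ) 1) : objective l 1 = 2 / l := by
  obtain ⟨hl₀, hl₁⟩ := hl
  have hpos : 0 ≤ 2 / l - 1 ^ 2 := by
    rw [one_pow, sub_nonneg, le_div_iff₀ hl₀]
    linarith
  rw [objective, radicand_eq_sq_add l 1 hl₀.ne' hl₁.ne, sub_self, zero_pow two_ne_zero,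
    mul_zero, zero_div, add_zero, Real.sqrt_sq hpos]
  ring

end Stmt15

open Stmt15 in
/-- The function `z ↦ z² + √(4(1−λz)²/((1−λ)λ²) + z⁴)` attains its
minimum at `z = 1`, with minimum value `2/λ`. -/
theorem stmt15 (l : ℝ) (hl : l ∈ Set.Ioo (0:ℝ) 1) :
    (∀ z : ℝ,
      (1:ℝ) ^ 2 + Real.sqrt (4 * (1 - l * 1) ^ 2 / ((1 - l) * l ^ 2) + 1 ^ 4)
        ≤ z ^ 2 + Real.sqrt (4 * (1 - l * z) ^ 2 / ((1 - l) * l ^ 2) + z ^ 4)) ∧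
    (1:ℝ) ^ 2 + Real.sqrt (4 * (1 - l * 1) ^ 2 / ((1 - l) * l ^ 2) + 1 ^ 4) = 2 / l := by
  exact ⟨fun z => (objective_one hl).trans_le (le_objective hl z), objective_one hl⟩
end

section
/- For every λ ∈ [0,1], the infimum over x ≥ 0 and y ∈ [−1,1] of (1/2)·( x + 1 − λ/2 + √( (1−λ/2)² + x² + x·(λy − 2√(1−λ)√(1−y²)) ) ) equals 1 − λ/2. (Note that the expression under the square root is always nonnegative on this domain, since λy − 2√(1−λ)√(1−y²) ≥ −(2−λ) for y ∈ [−1,1].) -/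
open scoped Kronecker ComplexOrder
open Matrix

noncomputable section

lemma key_ineq (l y : ℝ) (hl0 : 0 ≤ l) (hl1 : l ≤ 1) (hy : -1 ≤ y) (hy1 : y ≤ 1) :
    l - 2 ≤ l * y - 2 * Real.sqrt (1 - l) * Real.sqrt (1 - y ^ 2) := by
  set s := Real.sqrt (1 - l) with hs
  set r := Real.sqrt (1 - y ^ 2) with hr
  have hs0 : 0 ≤ s := Real.sqrt_nonneg _
  have hr0 : 0 ≤ r := Real.sqrt_nonneg _
  have hs2 : s ^ 2 = 1 - l := Real.sq_sqrt (by linarith)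
  have hr2 : r ^ 2 = 1 - y ^ 2 := Real.sq_sqrt (by nlinarith)
  have hA0 : 0 ≤ (1 - s ^ 2) * y + 1 + s ^ 2 := by nlinarith
  have h1 : (2 * s * r) ^ 2 ≤ ((1 - s ^ 2) * y + 1 + s ^ 2) ^ 2 := by
    nlinarith [sq_nonneg (y * (1 + s ^ 2) + (1 - s ^ 2))]
  have h2 : 2 * s * r ≤ (1 - s ^ 2) * y + 1 + s ^ 2 := by
    nlinarith [mul_nonneg hs0 hr0]
  nlinarith

/-- The infimum over `x ≥ 0` and `y ∈ [−1,1]` of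
`(x + 1 − λ/2 + √((1−λ/2)² + x² + x(λy − 2√(1−λ)√(1−y²))))/2` equals `1 − λ/2`. -/
theorem stmt16 (l : ℝ) (hl : l ∈ Set.Icc (0:ℝ) 1) :
    sInf {v : ℝ | ∃ x y : ℝ, 0 ≤ x ∧ y ∈ Set.Icc (-1:ℝ) 1 ∧
        v = (x + 1 - l / 2 +
          Real.sqrt ((1 - l / 2) ^ 2 + x ^ 2 +
            x * (l * y - 2 * Real.sqrt (1 - l) * Real.sqrt (1 - y ^ 2)))) / 2}
      = 1 - l / 2 := by
  obtain ⟨hl0, hl1⟩ := hl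
  have hc : (0:ℝ) ≤ 1 - l / 2 := by linarith
  have hlow : ∀ v ∈ {v : ℝ | ∃ x y : ℝ, 0 ≤ x ∧ y ∈ Set.Icc (-1:ℝ) 1 ∧
        v = (x + 1 - l / 2 +
          Real.sqrt ((1 - l / 2) ^ 2 + x ^ 2 +
            x * (l * y - 2 * Real.sqrt (1 - l) * Real.sqrt (1 - y ^ 2)))) / 2},
      1 - l / 2 ≤ v := by
    rintro v ⟨x, y, hx, ⟨hy, hy1⟩, rfl⟩
    have ht := key_ineq l y hl0 hl1 hy hy1
    set t := l * y - 2 * Real.sqrt (1 - l) * Real.sqrt (1 - y ^ 2) with htd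
    have hD : ((1 - l / 2) - x) ^ 2 ≤ (1 - l / 2) ^ 2 + x ^ 2 + x * t := by nlinarith
    have h1 : (1 - l / 2) - x ≤ Real.sqrt ((1 - l / 2) ^ 2 + x ^ 2 + x * t) := by
      calc (1 - l / 2) - x ≤ |(1 - l / 2) - x| := le_abs_self _
        _ = Real.sqrt (((1 - l / 2) - x) ^ 2) := (Real.sqrt_sq_eq_abs _).symm
        _ ≤ _ := Real.sqrt_le_sqrt hD
    linarith
  apply le_antisymm
  · apply csInf_le ⟨1 - l / 2, hlow⟩
    refine ⟨0, 0, le_refl 0, ⟨by norm_num, by norm_num⟩, ?_⟩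
    simp [Real.sqrt_sq hc]
  · exact le_csInf ⟨1 - l / 2, 0, 0, le_refl 0, ⟨by norm_num, by norm_num⟩, by
      simp [Real.sqrt_sq hc]⟩ hlow
end
end

section
/- Let d ≥ 1 and let σ be a density matrix on C^d ⊗ C^d with Tr_B σ = I_d/d, where (Tr_B σ)_{ij} = ∑_b σ_{(i,b),(j,b)}. Let √σ denote the positive semidefinite square root of σ, and for h, k ∈ {1,…,d} define the d×d matrices N^{(h,k)} with entries (N^{(h,k)})_{b,a} := √d · (√σ)_{(a,b),(k,h)}. Then: (i) ∑_{h,k=1}^d (N^{(h,k)})† N^{(h,k)} = I_d; and (ii) the completely positive trace-preserving map T(τ) := ∑_{h,k=1}^d N^{(h,k)} τ (N^{(h,k)})† on d×d matrices has Choi state equal to σ, i.e., (id_d ⊗ T)(ψ_d) = σ, where ψ_d = (1/d)·∑_{i,j=1}^d |ii⟩⟨jj| is the maximally entangled state on C^d ⊗ C^d. -/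
open scoped Kronecker ComplexOrder
open Matrix

noncomputable section

/-- The positive semidefinite square root, as defined in the older Mathlib
(`Matrix.PosSemidef.sqrt`, since removed). -/
def Matrix.PosSemidef.sqrt {n 𝕜 : Type*} [Fintype n] [RCLike 𝕜] [DecidableEq n]
    {A : Matrix n n 𝕜} (hA : A.PosSemidef) : Matrix n n 𝕜 :=
  (hA.1.eigenvectorUnitary : Matrix n n 𝕜) * diagonal ((↑) ∘ (√·) ∘ hA.1.eigenvalues) *
    (star hA.1.eigenvectorUnitary : Matrix n n 𝕜)

/-- The Kraus operators `N^{(h,k)}` built from a matrix `R` (to be taken as `√σ`):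
`(N^{(h,k)})_{b,a} = √d · R_{(a,b),(k,h)}`. -/
def krausOf (d : ℕ) (R : Matrix (Fin d × Fin d) (Fin d × Fin d) ℂ) (h k : Fin d) :
    Matrix (Fin d) (Fin d) ℂ :=
  Matrix.of fun b a => ((Real.sqrt d : ℝ) : ℂ) * R (a, b) (k, h)

/-!
For an arbitrary matrix `R` on `ℂᵈ ⊗ ℂᵈ`, the Kraus operators built from `R` satisfy
`∑ N†N = d · (Tr_B (R R†))ᵀ`, and the channel they define has Choi matrix `R R†`: the `√d` in
`N` cancels the `1/d` in `ψ_d`. For `R = √σ`, which is Hermitian, `R R† = σ`, so the Choi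
matrix is `σ`, and `Tr_B σ = I/d` turns the first identity into trace preservation.
-/

namespace Matrix.PosSemidef

variable {n 𝕜 : Type*} [Fintype n] [RCLike 𝕜] [DecidableEq n] {A : Matrix n n 𝕜}

lemma posSemidef_sqrt (hA : A.PosSemidef) : hA.sqrt.PosSemidef := by
  rw [Matrix.PosSemidef.sqrt, star_eq_conjTranspose]
  refine PosSemidef.mul_mul_conjTranspose_same (PosSemidef.diagonal fun i => ?_) _
  simp [Real.sqrt_nonneg]

lemma sqrt_mul_self (hA : A.PosSemidef) : hA.sqrt * hA.sqrt = A := by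
  conv_rhs => rw [hA.1.spectral_theorem, Unitary.conjStarAlgAut_apply]
  simp only [Matrix.PosSemidef.sqrt, Matrix.mul_assoc]
  rw [← Matrix.mul_assoc (star _) _, Unitary.coe_star_mul_self, Matrix.one_mul,
    ← Matrix.mul_assoc (diagonal _), diagonal_mul_diagonal]
  congr 3
  ext i
  simp [← RCLike.ofReal_mul, Real.mul_self_sqrt (hA.eigenvalues_nonneg i)]

lemma sqrt_mul_conjTranspose_sqrt (hA : A.PosSemidef) : hA.sqrt * hA.sqrtᴴ = A := by
  rw [hA.posSemidef_sqrt.isHermitian.eq, hA.sqrt_mul_self]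

end Matrix.PosSemidef

lemma ofReal_sqrt_natCast_mul_conj (d : ℕ) :
    ((√(d : ℝ) : ℝ) : ℂ) * (starRingEnd ℂ) (√(d : ℝ) : ℝ) = d := by
  rw [Complex.conj_ofReal, ← Complex.ofReal_mul, Real.mul_self_sqrt d.cast_nonneg,
    Complex.ofReal_natCast]

section Kraus

variable {d : ℕ} (R : Matrix (Fin d × Fin d) (Fin d × Fin d) ℂ)

lemma sum_conjTranspose_krausOf_mul_krausOf :
    ∑ h, ∑ k, (krausOf d R h k)ᴴ * krausOf d R h k = (d : ℂ) • (ptraceB (R * Rᴴ))ᵀ := by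
  ext a a'
  simp only [Matrix.sum_apply, mul_apply, conjTranspose_apply, krausOf, of_apply, star_mul',
    Complex.star_def, Matrix.smul_apply, transpose_apply, ptraceB, smul_eq_mul, Finset.mul_sum]
  rw [Finset.sum_comm_cycle]
  simp only [Fintype.sum_prod_type_right]
  refine Fintype.sum_congr _ _ fun b => Fintype.sum_congr _ _ fun h =>
    Fintype.sum_congr _ _ fun k => ?_
  rw [← ofReal_sqrt_natCast_mul_conj]
  ring

lemma idTensorFun_krausOf_maxEnt :
    idTensorFun (fun τ => ∑ h, ∑ k, krausOf d R h k * τ * (krausOf d R h k)ᴴ) (maxEnt d) =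
      R * Rᴴ := by
  ext ⟨i, b⟩ ⟨j, b'⟩
  have : NeZero d := ⟨i.pos.ne'⟩
  simp only [idTensorFun, maxEnt, of_apply, Matrix.sum_apply, mul_apply, conjTranspose_apply,
    krausOf, ite_and, mul_ite, mul_zero, ite_mul, zero_mul, Finset.sum_ite_eq, Finset.mem_univ,
    if_true, Fintype.sum_prod_type_right]
  refine Fintype.sum_congr _ _ fun h => Fintype.sum_congr _ _ fun k => ?_
  simp only [star_mul', Complex.star_def]
  calc _ = (√(d : ℝ) : ℂ) * (starRingEnd ℂ) (√(d : ℝ) : ℝ) / d *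
        (R (i, b) (k, h) * (starRingEnd ℂ) (R (j, b') (k, h))) := by ring
    _ = _ := by rw [ofReal_sqrt_natCast_mul_conj, div_self (NeZero.ne _), one_mul]

end Kraus

theorem stmt17_general (d : ℕ)
    (σ : Matrix (Fin d × Fin d) (Fin d × Fin d) ℂ)
    (hσ : σ.PosSemidef)
    (hpt : ptraceB σ = ((d : ℂ))⁻¹ • (1 : Matrix (Fin d) (Fin d) ℂ)) :
    (∑ h : Fin d, ∑ k : Fin d,
        (krausOf d hσ.sqrt h k)ᴴ * krausOf d hσ.sqrt h k) = 1 ∧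
    idTensorFun
      (fun τ => ∑ h : Fin d, ∑ k : Fin d,
        krausOf d hσ.sqrt h k * τ * (krausOf d hσ.sqrt h k)ᴴ)
      (maxEnt d) = σ := by
  rcases eq_or_ne d 0 with rfl | hd
  · exact ⟨Subsingleton.elim _ _, Subsingleton.elim _ _⟩
  rw [sum_conjTranspose_krausOf_mul_krausOf, idTensorFun_krausOf_maxEnt,
    hσ.sqrt_mul_conjTranspose_sqrt, hpt, transpose_smul, transpose_one, smul_smul,
    mul_inv_cancel₀ (Nat.cast_ne_zero.2 hd), one_smul]
  exact ⟨rfl, rfl⟩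

/-- The teleportation-based Kraus operators built from `√σ` form a
trace-preserving set, and the induced channel has Choi state `σ`. -/
theorem stmt17 (d : ℕ) (hd : 1 ≤ d)
    (σ : Matrix (Fin d × Fin d) (Fin d × Fin d) ℂ)
    (hσ : σ.PosSemidef) (htr : σ.trace = 1)
    (hpt : ptraceB σ = ((d : ℂ))⁻¹ • (1 : Matrix (Fin d) (Fin d) ℂ)) :
    (∑ h : Fin d, ∑ k : Fin d,
        (krausOf d hσ.sqrt h k)ᴴ * krausOf d hσ.sqrt h k) = 1 ∧
    idTensorFun
      (fun τ => ∑ h : Fin d, ∑ k : Fin d,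
        krausOf d hσ.sqrt h k * τ * (krausOf d hσ.sqrt h k)ᴴ)
      (maxEnt d) = σ :=
  stmt17_general d σ hσ hpt
end
end

section
/- Let d ≥ 1, let d_A', d_B' ≥ 1, and let γ be a private state with key dimension d on H = C^d ⊗ C^{d_A'} ⊗ C^d ⊗ C^{d_B'} (factors ordered A, A', B, B'): γ = U(ψ_d ⊗ σ_s)U†, where ψ_d = (1/d)·∑_{i,j=1}^d |ii⟩⟨jj|_{AB} is the maximally entangled state on the key systems A, B, σ_s is an arbitrary density matrix on C^{d_A'} ⊗ C^{d_B'}, and U = ∑_{i,j=1}^d |i⟩⟨i|_A ⊗ |j⟩⟨j|_B ⊗ U^{(ij)} is a twisting unitary with each U^{(ij)} unitary on C^{d_A'} ⊗ C^{d_B'}. Let ρ be a density matrix on H with ‖ρ − γ‖₁ ≤ ε for some ε ∈ [0,2). Then the max-relative entropy of entanglement of ρ across the bipartition AA' : BB' satisfies E_max(ρ) ≥ log₂ d + 2·log₂(1 − ε/2). -/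
open scoped Kronecker ComplexOrder
open Matrix

noncomputable section

/-- Trace norm `‖M‖₁ = Tr √(M†M)`. -/
def traceNorm {n : Type*} [Fintype n] [DecidableEq n] (M : Matrix n n ℂ) : ℝ :=
  (((Matrix.posSemidef_conjTranspose_mul_self M).1.eigenvectorUnitary : Matrix n n ℂ) *
    diagonal ((fun x : ℝ => (x : ℂ)) ∘ (√·) ∘ (Matrix.posSemidef_conjTranspose_mul_self M).1.eigenvalues) *
    (star (Matrix.posSemidef_conjTranspose_mul_self M).1.eigenvectorUnitary :
      Matrix n n ℂ)).trace.re

/-- Max-relative entropy of entanglement of a bipartite state: the infimum over separable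
states `σ` of `D_max(ρ‖σ)`. -/
def EmaxState {m k : Type*} [Fintype m] [Fintype k]
    (ρ : Matrix (m × k) (m × k) ℂ) : EReal :=
  sInf {x : EReal | ∃ σ : Matrix (m × k) (m × k) ℂ,
    IsDensity σ ∧ SepState σ ∧ x = Dmax ρ σ}

/-- The twisting unitary `U = ∑_{i,j} |i⟩⟨i|_A ⊗ |j⟩⟨j|_B ⊗ U^{(ij)}_{A'B'}`, on the
Hilbert space ordered as `(A × A') × (B × B')`. -/
def twistU (d dA dB : ℕ)
    (Uij : Fin d → Fin d → Matrix (Fin dA × Fin dB) (Fin dA × Fin dB) ℂ) :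
    Matrix ((Fin d × Fin dA) × (Fin d × Fin dB)) ((Fin d × Fin dA) × (Fin d × Fin dB)) ℂ :=
  Matrix.of fun p q =>
    (if p.1.1 = q.1.1 ∧ p.2.1 = q.2.1 then (1:ℂ) else 0) *
      Uij p.1.1 p.2.1 (p.1.2, p.2.2) (q.1.2, q.2.2)

/-- The state `ψ_d ⊗ σ_s` (maximally entangled on the key systems `A,B`, `σ_s` on the
shields `A',B'`), on the Hilbert space ordered as `(A × A') × (B × B')`. -/
def keyShield (d dA dB : ℕ)
    (σs : Matrix (Fin dA × Fin dB) (Fin dA × Fin dB) ℂ) :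
    Matrix ((Fin d × Fin dA) × (Fin d × Fin dB)) ((Fin d × Fin dA) × (Fin d × Fin dB)) ℂ :=
  Matrix.of fun p q =>
    (if p.1.1 = p.2.1 ∧ q.1.1 = q.2.1 then (1 / (d:ℂ)) else 0) *
      σs (p.1.2, p.2.2) (q.1.2, q.2.2)

/-! The projector `P = U (ψ_d ⊗ 1) U†` onto the twisted maximally entangled subspace separates `ρ`
from the separable states. As `0 ≤ P ≤ 1` and `Tr (P γ) = 1`, we get `Tr (P ρ) ≥ 1 - ε/2` when
`‖ρ - γ‖₁ ≤ ε`. For a product vector `u ⊗ v`, the contraction `∑ᵢ ⟨ii|_{AB} U† (u ⊗ v)` equals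
`∑ₖ U^{(kk)†} (uₖ ⊗ vₖ)`, of norm at most `‖u‖ ‖v‖` by the triangle and Cauchy–Schwarz
inequalities; hence `Tr (P σ) ≤ 1/d` for separable `σ`. So `2^r σ ≥ ρ` forces
`2^r ≥ d (1 - ε/2)`, and `log₂ (1 - ε/2) ≤ 0`. -/

open scoped MatrixOrder

section TraceInequalities

variable {n : Type*} [Fintype n]

theorem traceNorm_eq_re_trace_abs [DecidableEq n] (M : Matrix n n ℂ) :
    traceNorm M = (CFC.abs M).trace.re := by
  have h := (posSemidef_conjTranspose_mul_self M).1.cfc_eq Real.sqrt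
  rw [IsHermitian.cfc, Unitary.conjStarAlgAut_apply] at h
  rw [CFC.abs, star_eq_conjTranspose,
    CFC.sqrt_eq_real_sqrt _ (posSemidef_conjTranspose_mul_self M).nonneg, cfcₙ_eq_cfc, h]
  rfl

theorem trace_mul_nonneg {A B : Matrix n n ℂ} (hA : 0 ≤ A) (hB : 0 ≤ B) :
    0 ≤ (A * B).trace := by
  classical
  obtain ⟨C, rfl⟩ := CStarAlgebra.nonneg_iff_eq_star_mul_self.mp hB
  rw [← mul_assoc, trace_mul_cycle]
  exact (hA.posSemidef.mul_mul_conjTranspose_same C).trace_nonneg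

theorem re_trace_mul_nonneg {A B : Matrix n n ℂ} (hA : 0 ≤ A) (hB : 0 ≤ B) :
    0 ≤ (A * B).trace.re :=
  (Complex.nonneg_iff.mp (trace_mul_nonneg hA hB)).1

/-- Splitting `Δ = Δ⁺ - Δ⁻` with `Tr Δ⁺ = Tr Δ⁻ = ‖Δ‖₁ / 2`, the operator `0 ≤ T ≤ 1` loses at most
`Tr Δ⁻` from `Tr (T Δ)`. -/
theorem neg_half_traceNorm_le_re_trace_mul [DecidableEq n] {T Δ : Matrix n n ℂ} (hT₀ : 0 ≤ T)
    (hT₁ : T ≤ 1) (hΔ : IsSelfAdjoint Δ) (hΔtr : Δ.trace = 0) :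
    -(traceNorm Δ / 2) ≤ (T * Δ).trace.re := by
  have hpos := re_trace_mul_nonneg hT₀ (CFC.posPart_nonneg Δ)
  have hneg := re_trace_mul_nonneg (sub_nonneg.mpr hT₁) (CFC.negPart_nonneg Δ)
  have hsplit : Δ = Δ⁺ - Δ⁻ := (CFC.posPart_sub_negPart Δ hΔ).symm
  have htr : Δ⁺.trace.re = Δ⁻.trace.re := by
    rw [hsplit, trace_sub, sub_eq_zero] at hΔtr
    rw [hΔtr]
  rw [traceNorm_eq_re_trace_abs, ← CFC.posPart_add_negPart Δ hΔ, trace_add, Complex.add_re]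
  rw [sub_mul, one_mul, trace_sub, Complex.sub_re] at hneg
  conv_rhs => rw [hsplit, mul_sub, trace_sub, Complex.sub_re]
  linarith

end TraceInequalities

section MaxRelativeEntropy

variable {n : Type*} [Fintype n]

/-- `2^r σ ≥ ρ` gives `p ≤ Tr (W ρ) ≤ 2^r Tr (W σ) ≤ 2^r c`. -/
theorem logb_div_le_Dmax {ρ σ W : Matrix n n ℂ} (hW : 0 ≤ W) {p c : ℝ} (hp : 0 < p)
    (hρ : p ≤ (W * ρ).trace.re) (hσ : (W * σ).trace.re ≤ c) :
    ((Real.logb 2 (p / c) : ℝ) : EReal) ≤ Dmax ρ σ := by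
  refine le_sInf ?_
  rintro _ ⟨r, rfl, hr⟩
  have h2r : (0 : ℝ) < 2 ^ r := Real.rpow_pos_of_pos two_pos r
  have hdom : 0 ≤ (W * ((2 : ℝ) ^ r • σ - ρ)).trace.re :=
    re_trace_mul_nonneg hW (nonneg_iff_posSemidef.mpr hr)
  rw [mul_sub, mul_smul_comm, trace_sub, trace_smul, Complex.sub_re, Complex.smul_re,
    smul_eq_mul] at hdom
  have hpc : p ≤ 2 ^ r * c := by nlinarith
  have hc : 0 < c := pos_of_mul_pos_right (hp.trans_le hpc) h2r.le
  rw [EReal.coe_le_coe_iff, Real.logb_le_iff_le_rpow one_lt_two (div_pos hp hc),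
    div_le_iff₀ hc]
  exact hpc

theorem logb_div_le_EmaxState {m k : Type*} [Fintype m] [Fintype k]
    {ρ W : Matrix (m × k) (m × k) ℂ} (hW : 0 ≤ W) {p c : ℝ} (hp : 0 < p)
    (hρ : p ≤ (W * ρ).trace.re)
    (hsep : ∀ σ, IsDensity σ → SepState σ → (W * σ).trace.re ≤ c) :
    ((Real.logb 2 (p / c) : ℝ) : EReal) ≤ EmaxState ρ :=
  le_sInf fun _ ⟨σ, hσ, hσsep, hx⟩ => hx ▸ logb_div_le_Dmax hW hp hρ (hsep σ hσ hσsep)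

end MaxRelativeEntropy

section EuclideanNorm

variable {ι κ : Type*}

theorem star_dotProduct_self_eq_norm_sq [Fintype ι] (x : ι → ℂ) :
    star x ⬝ᵥ x = ((‖WithLp.toLp 2 x‖ ^ 2 : ℝ) : ℂ) := by
  rw [dotProduct_comm, ← EuclideanSpace.inner_eq_star_dotProduct, inner_self_eq_norm_sq_to_K]
  push_cast
  rfl

theorem trace_vecMulVec_star [Fintype ι] (x : ι → ℂ) :
    (vecMulVec x (star x)).trace = ((‖WithLp.toLp 2 x‖ ^ 2 : ℝ) : ℂ) := by
  rw [trace_vecMulVec, dotProduct_comm, star_dotProduct_self_eq_norm_sq]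

theorem mul_vecMulVec_star_mul_conjTranspose [Fintype ι] (A : Matrix κ ι ℂ) (x : ι → ℂ) :
    A * vecMulVec x (star x) * Aᴴ = vecMulVec (A *ᵥ x) (star (A *ᵥ x)) := by
  rw [mul_vecMulVec, vecMulVec_mul, star_mulVec]

theorem norm_toLp_conjTranspose_mulVec [Fintype ι] [DecidableEq ι] {A : Matrix ι ι ℂ}
    (hA : A * Aᴴ = 1) (x : ι → ℂ) : ‖WithLp.toLp 2 (Aᴴ *ᵥ x)‖ = ‖WithLp.toLp 2 x‖ := by
  have h : star (Aᴴ *ᵥ x) ⬝ᵥ (Aᴴ *ᵥ x) = star x ⬝ᵥ x := by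
    rw [star_mulVec, conjTranspose_conjTranspose, ← dotProduct_mulVec, mulVec_mulVec, hA,
      one_mulVec]
  rw [star_dotProduct_self_eq_norm_sq, star_dotProduct_self_eq_norm_sq] at h
  exact (sq_eq_sq₀ (norm_nonneg _) (norm_nonneg _)).mp (by exact_mod_cast h)

theorem norm_toLp_mul_prod [Fintype ι] [Fintype κ] (u : ι → ℂ) (v : κ → ℂ) :
    ‖WithLp.toLp 2 (fun p : ι × κ => u p.1 * v p.2)‖ = ‖WithLp.toLp 2 u‖ * ‖WithLp.toLp 2 v‖ := by
  refine (sq_eq_sq₀ (norm_nonneg _) (by positivity)).mp ?_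
  simp only [EuclideanSpace.norm_sq_eq, mul_pow, Fintype.sum_prod_type, norm_mul,
    Finset.sum_mul_sum]

theorem sum_norm_sq_toLp_curry [Fintype ι] [Fintype κ] (u : ι × κ → ℂ) :
    ∑ i, ‖WithLp.toLp 2 (fun k => u (i, k))‖ ^ 2 = ‖WithLp.toLp 2 u‖ ^ 2 := by
  simp only [EuclideanSpace.norm_sq_eq, Fintype.sum_prod_type]

theorem kronecker_vecMulVec_star (u : ι → ℂ) (v : κ → ℂ) :
    vecMulVec u (star u) ⊗ₖ vecMulVec v (star v) =
      vecMulVec (fun p : ι × κ => u p.1 * v p.2) (star fun p : ι × κ => u p.1 * v p.2) := by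
  ext p q
  simp only [kroneckerMap_apply, vecMulVec_apply, Pi.star_apply, star_mul']
  ring

end EuclideanNorm

section Twisting

variable {d dA dB : ℕ} {Uij : Fin d → Fin d → Matrix (Fin dA × Fin dB) (Fin dA × Fin dB) ℂ}

def twistIndexEquiv (d dA dB : ℕ) :
    (Fin dA × Fin dB) × (Fin d × Fin d) ≃ (Fin d × Fin dA) × (Fin d × Fin dB) where
  toFun x := ((x.2.1, x.1.1), (x.2.2, x.1.2))
  invFun p := ((p.1.2, p.2.2), (p.1.1, p.2.1))
  left_inv _ := rfl
  right_inv _ := rfl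

theorem twistU_eq_reindex_blockDiagonal :
    twistU d dA dB Uij = reindex (twistIndexEquiv d dA dB) (twistIndexEquiv d dA dB)
      (blockDiagonal fun ij => Uij ij.1 ij.2) := by
  ext p q
  simp [twistU, twistIndexEquiv, blockDiagonal_apply, Prod.ext_iff, ite_mul]

theorem conjTranspose_twistU :
    (twistU d dA dB Uij)ᴴ = twistU d dA dB fun i j => (Uij i j)ᴴ := by
  rw [twistU_eq_reindex_blockDiagonal, twistU_eq_reindex_blockDiagonal, conjTranspose_reindex,
    blockDiagonal_conjTranspose]

theorem twistU_mem_unitaryGroup (hU : ∀ i j, Uij i j ∈ unitaryGroup (Fin dA × Fin dB) ℂ) :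
    twistU d dA dB Uij ∈ unitaryGroup _ ℂ := by
  have hUU : ∀ ij : Fin d × Fin d, Uij ij.1 ij.2 * (Uij ij.1 ij.2)ᴴ = 1 :=
    fun ij => mem_unitaryGroup_iff.mp (hU ij.1 ij.2)
  rw [mem_unitaryGroup_iff, twistU_eq_reindex_blockDiagonal, star_eq_conjTranspose,
    conjTranspose_reindex, reindex_apply, reindex_apply, submatrix_mul_equiv,
    blockDiagonal_conjTranspose, ← blockDiagonal_mul]
  simp only [hUU]
  rw [← Pi.one_def, blockDiagonal_one, submatrix_one_equiv]

theorem twistU_mulVec_apply (w : (Fin d × Fin dA) × (Fin d × Fin dB) → ℂ) (i j : Fin d)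
    (a : Fin dA) (b : Fin dB) :
    (twistU d dA dB Uij *ᵥ w) ((i, a), (j, b)) =
      (Uij i j *ᵥ fun c => w ((i, c.1), (j, c.2))) (a, b) := by
  simp only [mulVec, dotProduct, twistU, of_apply, Fintype.sum_prod_type]
  simp [ite_and, ite_mul, Finset.sum_ite_eq]

end Twisting

section KeyShield

variable {d dA dB : ℕ}

/-- `J = ∑ᵢ ⟨ii|_{AB} ⊗ 1_{A'B'}`, so that `ψ_d ⊗ σ = d⁻¹ Jᴴ σ J`. -/
def diagContraction (d dA dB : ℕ) :
    Matrix (Fin dA × Fin dB) ((Fin d × Fin dA) × (Fin d × Fin dB)) ℂ :=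
  of fun c p => if p.1.1 = p.2.1 ∧ (p.1.2, p.2.2) = c then 1 else 0

theorem keyShield_eq_smul (S : Matrix (Fin dA × Fin dB) (Fin dA × Fin dB) ℂ) :
    keyShield d dA dB S =
      (d : ℂ)⁻¹ • ((diagContraction d dA dB)ᴴ * S * diagContraction d dA dB) := by
  ext p q
  simp only [keyShield, diagContraction, Matrix.smul_apply, mul_apply, conjTranspose_apply,
    of_apply, Fintype.sum_prod_type]
  simp [ite_and, ite_mul, mul_ite, Finset.sum_ite_eq, div_eq_inv_mul, apply_ite (starRingEnd ℂ)]
  split_ifs <;> rfl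

theorem diagContraction_mul_conjTranspose :
    diagContraction d dA dB * (diagContraction d dA dB)ᴴ = (d : ℂ) • 1 := by
  ext c c'
  simp only [diagContraction, mul_apply, conjTranspose_apply, of_apply, Fintype.sum_prod_type]
  simp [ite_and, Prod.ext_iff, one_apply, Finset.sum_ite_eq, Finset.sum_ite_eq']
  split_ifs <;> simp

theorem diagContraction_mulVec_apply (y : (Fin d × Fin dA) × (Fin d × Fin dB) → ℂ)
    (c : Fin dA × Fin dB) :
    (diagContraction d dA dB *ᵥ y) c = ∑ k, y ((k, c.1), (k, c.2)) := by
  simp only [diagContraction, mulVec, dotProduct, of_apply, Fintype.sum_prod_type]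
  simp [ite_and, Prod.ext_iff, Finset.sum_ite_eq, Finset.sum_ite_eq']

theorem keyShield_one_mul (hd : d ≠ 0) (S : Matrix (Fin dA × Fin dB) (Fin dA × Fin dB) ℂ) :
    keyShield d dA dB 1 * keyShield d dA dB S = keyShield d dA dB S := by
  rw [keyShield_eq_smul, keyShield_eq_smul, Matrix.mul_one, smul_mul_smul_comm]
  set J := diagContraction d dA dB
  have hJJ : Jᴴ * J * (Jᴴ * S * J) = (d : ℂ) • (Jᴴ * S * J) := by
    rw [show Jᴴ * J * (Jᴴ * S * J) = Jᴴ * (J * Jᴴ) * S * J by simp only [Matrix.mul_assoc],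
      diagContraction_mul_conjTranspose, Matrix.mul_smul, Matrix.mul_one, Matrix.smul_mul,
      Matrix.smul_mul]
  rw [hJJ, smul_smul, mul_assoc, inv_mul_cancel₀ (Nat.cast_ne_zero.mpr hd), mul_one]

theorem trace_keyShield (hd : d ≠ 0) (S : Matrix (Fin dA × Fin dB) (Fin dA × Fin dB) ℂ) :
    (keyShield d dA dB S).trace = S.trace := by
  rw [keyShield_eq_smul, trace_smul, trace_mul_cycle, diagContraction_mul_conjTranspose,
    smul_mul_assoc, one_mul, trace_smul, smul_smul,
    inv_mul_cancel₀ (Nat.cast_ne_zero.mpr hd : (d : ℂ) ≠ 0), one_smul]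

theorem posSemidef_keyShield {S : Matrix (Fin dA × Fin dB) (Fin dA × Fin dB) ℂ}
    (hS : S.PosSemidef) : (keyShield d dA dB S).PosSemidef := by
  rw [keyShield_eq_smul]
  exact (hS.conjTranspose_mul_mul_same _).smul (by simp)

theorem isStarProjection_keyShield_one (hd : d ≠ 0) :
    IsStarProjection (keyShield d dA dB 1) := by
  refine ⟨keyShield_one_mul hd 1, ?_⟩
  rw [IsSelfAdjoint, keyShield_eq_smul, star_eq_conjTranspose, conjTranspose_smul,
    Matrix.mul_one, conjTranspose_mul, conjTranspose_conjTranspose]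
  simp

end KeyShield

section KeyProjector

variable {d dA dB : ℕ}

def privateState (Uij : Fin d → Fin d → Matrix (Fin dA × Fin dB) (Fin dA × Fin dB) ℂ)
    (σs : Matrix (Fin dA × Fin dB) (Fin dA × Fin dB) ℂ) :
    Matrix ((Fin d × Fin dA) × (Fin d × Fin dB)) ((Fin d × Fin dA) × (Fin d × Fin dB)) ℂ :=
  twistU d dA dB Uij * keyShield d dA dB σs * (twistU d dA dB Uij)ᴴ

def keyProjector (Uij : Fin d → Fin d → Matrix (Fin dA × Fin dB) (Fin dA × Fin dB) ℂ) :
    Matrix ((Fin d × Fin dA) × (Fin d × Fin dB)) ((Fin d × Fin dA) × (Fin d × Fin dB)) ℂ :=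
  privateState Uij 1

variable {Uij : Fin d → Fin d → Matrix (Fin dA × Fin dB) (Fin dA × Fin dB) ℂ}

theorem isDensity_privateState (hd : d ≠ 0)
    (hU : ∀ i j, Uij i j ∈ unitaryGroup (Fin dA × Fin dB) ℂ)
    {σs : Matrix (Fin dA × Fin dB) (Fin dA × Fin dB) ℂ} (hσs : IsDensity σs) :
    IsDensity (privateState Uij σs) := by
  refine ⟨(posSemidef_keyShield hσs.1).mul_mul_conjTranspose_same _, ?_⟩
  rw [privateState, trace_mul_cycle, ← star_eq_conjTranspose,
    mem_unitaryGroup_iff'.mp (twistU_mem_unitaryGroup hU), one_mul, trace_keyShield hd, hσs.2]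

theorem isStarProjection_keyProjector (hd : d ≠ 0)
    (hU : ∀ i j, Uij i j ∈ unitaryGroup (Fin dA × Fin dB) ℂ) :
    IsStarProjection (keyProjector Uij) :=
  (isStarProjection_keyShield_one hd).map
    (Unitary.conjStarAlgAut ℂ _ ⟨twistU d dA dB Uij, twistU_mem_unitaryGroup hU⟩)

theorem trace_keyProjector_mul_privateState (hd : d ≠ 0)
    (hU : ∀ i j, Uij i j ∈ unitaryGroup (Fin dA × Fin dB) ℂ)
    (σs : Matrix (Fin dA × Fin dB) (Fin dA × Fin dB) ℂ) :
    (keyProjector Uij * privateState Uij σs).trace = σs.trace := by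
  set U := twistU d dA dB Uij
  have hUU : Uᴴ * U = 1 := mem_unitaryGroup_iff'.mp (twistU_mem_unitaryGroup hU)
  calc (keyProjector Uij * privateState Uij σs).trace
      = (U * (keyShield d dA dB 1 * keyShield d dA dB σs) * Uᴴ).trace := by
        simp only [keyProjector, privateState, ← mul_assoc]
        rw [mul_assoc _ Uᴴ U, hUU, mul_one, mul_assoc U]
    _ = σs.trace := by
        rw [trace_mul_cycle, hUU, one_mul, keyShield_one_mul hd, trace_keyShield hd]

theorem keyProjector_eq_smul :
    keyProjector Uij = (d : ℂ)⁻¹ •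
      ((diagContraction d dA dB * (twistU d dA dB Uij)ᴴ)ᴴ *
        (diagContraction d dA dB * (twistU d dA dB Uij)ᴴ)) := by
  rw [keyProjector, privateState, keyShield_eq_smul, Matrix.mul_one, conjTranspose_mul,
    conjTranspose_conjTranspose, Matrix.mul_smul, Matrix.smul_mul]
  simp only [Matrix.mul_assoc]

theorem re_trace_keyProjector_mul_vecMulVec (w : (Fin d × Fin dA) × (Fin d × Fin dB) → ℂ) :
    (keyProjector Uij * vecMulVec w (star w)).trace.re =
      ‖WithLp.toLp 2 (diagContraction d dA dB *ᵥ ((twistU d dA dB Uij)ᴴ *ᵥ w))‖ ^ 2 / d := by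
  rw [keyProjector_eq_smul, Matrix.smul_mul, trace_smul, Matrix.mul_assoc, trace_mul_comm,
    mul_vecMulVec_star_mul_conjTranspose, trace_vecMulVec_star, mulVec_mulVec, smul_eq_mul,
    ← Complex.ofReal_natCast, ← Complex.ofReal_inv, Complex.re_ofReal_mul, Complex.ofReal_re,
    inv_mul_eq_div]

theorem norm_diagContraction_mulVec_twist_le
    (hU : ∀ i j, Uij i j ∈ unitaryGroup (Fin dA × Fin dB) ℂ)
    (u : Fin d × Fin dA → ℂ) (v : Fin d × Fin dB → ℂ) :
    ‖WithLp.toLp 2 (diagContraction d dA dB *ᵥ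
        ((twistU d dA dB Uij)ᴴ *ᵥ fun p => u p.1 * v p.2))‖ ≤
      ‖WithLp.toLp 2 u‖ * ‖WithLp.toLp 2 v‖ := by
  have hsum : diagContraction d dA dB *ᵥ ((twistU d dA dB Uij)ᴴ *ᵥ fun p => u p.1 * v p.2) =
      ∑ k, (Uij k k)ᴴ *ᵥ fun c => u (k, c.1) * v (k, c.2) := by
    funext c
    rw [diagContraction_mulVec_apply, Finset.sum_apply, conjTranspose_twistU]
    exact Finset.sum_congr rfl fun k _ => twistU_mulVec_apply _ k k c.1 c.2
  rw [hsum, WithLp.toLp_sum]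
  refine (norm_sum_le _ _).trans ?_
  calc ∑ k, ‖WithLp.toLp 2 ((Uij k k)ᴴ *ᵥ fun c => u (k, c.1) * v (k, c.2))‖
      = ∑ k, ‖WithLp.toLp 2 fun a => u (k, a)‖ * ‖WithLp.toLp 2 fun b => v (k, b)‖ := by
        simp only [norm_toLp_conjTranspose_mulVec (mem_unitaryGroup_iff.mp (hU _ _))]
        exact Finset.sum_congr rfl fun k _ =>
          norm_toLp_mul_prod (fun a => u (k, a)) (fun b => v (k, b))
    _ ≤ √(∑ k, ‖WithLp.toLp 2 fun a => u (k, a)‖ ^ 2) *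
          √(∑ k, ‖WithLp.toLp 2 fun b => v (k, b)‖ ^ 2) :=
        Real.sum_mul_le_sqrt_mul_sqrt _ (fun k => ‖WithLp.toLp 2 fun a => u (k, a)‖)
          (fun k => ‖WithLp.toLp 2 fun b => v (k, b)‖)
    _ = ‖WithLp.toLp 2 u‖ * ‖WithLp.toLp 2 v‖ := by
        rw [sum_norm_sq_toLp_curry, sum_norm_sq_toLp_curry, Real.sqrt_sq (norm_nonneg _),
          Real.sqrt_sq (norm_nonneg _)]

theorem re_trace_keyProjector_mul_kronecker_le
    (hU : ∀ i j, Uij i j ∈ unitaryGroup (Fin dA × Fin dB) ℂ)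
    {P : Matrix (Fin d × Fin dA) (Fin d × Fin dA) ℂ}
    {Q : Matrix (Fin d × Fin dB) (Fin d × Fin dB) ℂ} (hP : P.PosSemidef) (hQ : Q.PosSemidef) :
    (keyProjector Uij * (P ⊗ₖ Q)).trace.re ≤ P.trace.re * Q.trace.re / d := by
  obtain ⟨m, u, rfl⟩ := posSemidef_iff_eq_sum_vecMulVec.mp hP
  obtain ⟨m', v, rfl⟩ := posSemidef_iff_eq_sum_vecMulVec.mp hQ
  have hkron : (∑ i, vecMulVec (u i) (star (u i))) ⊗ₖ (∑ j, vecMulVec (v j) (star (v j))) =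
      ∑ i, ∑ j, vecMulVec (u i) (star (u i)) ⊗ₖ vecMulVec (v j) (star (v j)) := by
    ext p q
    simp only [kroneckerMap_apply, Matrix.sum_apply, Finset.sum_mul_sum]
  simp only [hkron, kronecker_vecMulVec_star, Matrix.mul_sum, trace_sum, Complex.re_sum,
    trace_vecMulVec_star, Complex.ofReal_re, re_trace_keyProjector_mul_vecMulVec,
    Finset.sum_mul_sum, Finset.sum_div]
  gcongr with i _ j _
  rw [← mul_pow]
  exact pow_le_pow_left₀ (norm_nonneg _) (norm_diagContraction_mulVec_twist_le hU _ _) 2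

theorem re_trace_keyProjector_mul_le_of_sepState
    (hU : ∀ i j, Uij i j ∈ unitaryGroup (Fin dA × Fin dB) ℂ)
    {σ : Matrix ((Fin d × Fin dA) × (Fin d × Fin dB)) ((Fin d × Fin dA) × (Fin d × Fin dB)) ℂ}
    (hσ : SepState σ) : (keyProjector Uij * σ).trace.re ≤ (d : ℝ)⁻¹ := by
  obtain ⟨L, p, P, Q, hp0, hp1, hP, hQ, rfl⟩ := hσ
  simp only [Matrix.mul_sum, trace_sum, Complex.re_sum, mul_smul_comm, trace_smul, smul_eq_mul,
    Complex.re_ofReal_mul]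
  calc ∑ i, p i * (keyProjector Uij * (P i ⊗ₖ Q i)).trace.re
      ≤ ∑ i, p i * ((P i).trace.re * (Q i).trace.re / d) := by
        gcongr with i
        exacts [hp0 i, re_trace_keyProjector_mul_kronecker_le hU (hP i).1 (hQ i).1]
    _ = (d : ℝ)⁻¹ := by
        simp only [(hP _).2, (hQ _).2, Complex.one_re, one_mul, one_div, ← Finset.sum_mul, hp1]

end KeyProjector

theorem stmt18_general (d dA dB : ℕ) (hd : 1 ≤ d)
    (σs : Matrix (Fin dA × Fin dB) (Fin dA × Fin dB) ℂ) (hσs : IsDensity σs)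
    (Uij : Fin d → Fin d → Matrix (Fin dA × Fin dB) (Fin dA × Fin dB) ℂ)
    (hU : ∀ i j, Uij i j * (Uij i j)ᴴ = 1 ∧ (Uij i j)ᴴ * Uij i j = 1)
    (ρ : Matrix ((Fin d × Fin dA) × (Fin d × Fin dB))
      ((Fin d × Fin dA) × (Fin d × Fin dB)) ℂ)
    (hρ : IsDensity ρ) (ε : ℝ) (hε0 : 0 ≤ ε) (hε2 : ε < 2)
    (hclose : traceNorm
        (ρ - twistU d dA dB Uij * keyShield d dA dB σs * (twistU d dA dB Uij)ᴴ) ≤ ε) :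
    ((Real.logb 2 d + 2 * Real.logb 2 (1 - ε / 2) : ℝ) : EReal) ≤ EmaxState ρ := by
  have hd0 : d ≠ 0 := by omega
  have hUnit : ∀ i j, Uij i j ∈ unitaryGroup _ ℂ := fun i j => mem_unitaryGroup_iff.mpr (hU i j).1
  have hT := isStarProjection_keyProjector hd0 hUnit
  have hγ := isDensity_privateState hd0 hUnit hσs
  have hγclose : traceNorm (ρ - privateState Uij σs) ≤ ε := hclose
  have hρT : 1 - ε / 2 ≤ (keyProjector Uij * ρ).trace.re := by
    have h := neg_half_traceNorm_le_re_trace_mul hT.nonneg hT.le_one (hρ.1.1.sub hγ.1.1)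
      (by rw [trace_sub, hρ.2, hγ.2, sub_self])
    rw [mul_sub, trace_sub, Complex.sub_re, trace_keyProjector_mul_privateState hd0 hUnit, hσs.2,
      Complex.one_re] at h
    linarith
  have hE := logb_div_le_EmaxState hT.nonneg (by linarith) hρT fun _ _ hσ =>
    re_trace_keyProjector_mul_le_of_sepState hUnit hσ
  refine le_trans ?_ hE
  have hlog : Real.logb 2 (1 - ε / 2) ≤ 0 := Real.logb_nonpos one_lt_two (by linarith) (by linarith)
  rw [EReal.coe_le_coe_iff, div_inv_eq_mul, Real.logb_mul (by linarith) (by positivity)]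
  linarith

/-- A state `ε`-close in trace norm to a private state with key
dimension `d` has max-relative entropy of entanglement at least
`log₂ d + 2 log₂(1 − ε/2)` across the bipartition `AA' : BB'`. -/
theorem stmt18 (d dA dB : ℕ) (hd : 1 ≤ d) (hdA : 1 ≤ dA) (hdB : 1 ≤ dB)
    (σs : Matrix (Fin dA × Fin dB) (Fin dA × Fin dB) ℂ) (hσs : IsDensity σs)
    (Uij : Fin d → Fin d → Matrix (Fin dA × Fin dB) (Fin dA × Fin dB) ℂ)
    (hU : ∀ i j, Uij i j * (Uij i j)ᴴ = 1 ∧ (Uij i j)ᴴ * Uij i j = 1)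
    (ρ : Matrix ((Fin d × Fin dA) × (Fin d × Fin dB))
      ((Fin d × Fin dA) × (Fin d × Fin dB)) ℂ)
    (hρ : IsDensity ρ) (ε : ℝ) (hε0 : 0 ≤ ε) (hε2 : ε < 2)
    (hclose : traceNorm
        (ρ - twistU d dA dB Uij * keyShield d dA dB σs * (twistU d dA dB Uij)ᴴ) ≤ ε) :
    ((Real.logb 2 d + 2 * Real.logb 2 (1 - ε / 2) : ℝ) : EReal) ≤ EmaxState ρ :=
  stmt18_general d dA dB hd σs hσs Uij hU ρ hρ ε hε0 hε2 hclose
end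
end
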